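/- arXiv:2206.11206 — 10 statements merged into one kernel-verified Lean document; each statement's English description precedes it below -/
import Mathlib

section
/- Let X and Y be complex Banach spaces and let f : X → Y be holomorphic on B_X and uniformly continuous on the closed unit ball of X. Then the following are equivalent: (1) f attains its v-norm; (2) there exists s₀ ∈ [0,1) such that ‖f‖_v = (1 − s₀²)‖f‖_{s₀} and f attains its s₀-norm, i.e. there is x₀ with ‖x₀‖ ≤ s₀ and ‖f(x₀)‖ = ‖f‖_{s₀}. -/
open Filter Topology Metric

/-- The weighted ("v-") norm: `sup_{‖x‖<1} (1 - ‖x‖²)‖f x‖`. -/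
noncomputable def vNorm {X Y : Type*} [NormedAddCommGroup X] [NormedAddCommGroup Y]
    (f : X → Y) : ℝ :=
  sSup ((fun x => (1 - ‖x‖ ^ 2) * ‖f x‖) '' {x : X | ‖x‖ < 1})

/-- The `s`-norm: `sup_{‖x‖<1} ‖f (s • x)‖`. -/
noncomputable def sNorm {X Y : Type*} [NormedAddCommGroup X] [NormedSpace ℂ X]
    [NormedAddCommGroup Y] (s : ℝ) (f : X → Y) : ℝ :=
  sSup ((fun x => ‖f ((s : ℂ) • x)‖) '' {x : X | ‖x‖ < 1})

/-- The supremum norm over the open unit ball. -/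
noncomputable def supNorm {X Y : Type*} [NormedAddCommGroup X] [NormedAddCommGroup Y]
    (f : X → Y) : ℝ :=
  sSup ((fun x => ‖f x‖) '' {x : X | ‖x‖ < 1})

/-- `P` is a continuous `N`-homogeneous polynomial: `P x = A(x, …, x)` for a continuous
`N`-linear map `A`. -/
def IsHomPoly {X Y : Type*} [NormedAddCommGroup X] [NormedSpace ℂ X]
    [NormedAddCommGroup Y] [NormedSpace ℂ Y] (N : ℕ) (P : X → Y) : Prop :=
  ∃ A : ContinuousMultilinearMap ℂ (fun _ : Fin N => X) Y, ∀ x, P x = A (fun _ => x)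

/-- `P` is a polynomial of degree at most `N`: a sum of continuous `k`-homogeneous
polynomials for `k = 0, …, N`. -/
def IsPolyDeg {X Y : Type*} [NormedAddCommGroup X] [NormedSpace ℂ X]
    [NormedAddCommGroup Y] [NormedSpace ℂ Y] (N : ℕ) (P : X → Y) : Prop :=
  ∃ Pk : ℕ → X → Y, (∀ k, k ≤ N → IsHomPoly k (Pk k)) ∧
    ∀ x, P x = ∑ k ∈ Finset.range (N + 1), Pk k x

/-- `f` attains its `s`-norm. -/
def AttainsS {X Y : Type*} [NormedAddCommGroup X] [NormedSpace ℂ X]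
    [NormedAddCommGroup Y] (s : ℝ) (f : X → Y) : Prop :=
  ∃ x₀ : X, ‖x₀‖ ≤ s ∧ ‖f x₀‖ = sNorm s f

/-- `f` attains its `v`-norm. -/
def AttainsV {X Y : Type*} [NormedAddCommGroup X] [NormedAddCommGroup Y]
    (f : X → Y) : Prop :=
  ∃ x₀ : X, ‖x₀‖ ≤ 1 ∧ (1 - ‖x₀‖ ^ 2) * ‖f x₀‖ = vNorm f

/-!
If `x₀` maximises `(1 - ‖x‖²)‖f x‖` over the open unit ball, then every `y` with
`‖y‖ ≤ ‖x₀‖` carries at least the weight of `x₀`, so `x₀` maximises `‖f‖` on the closed ball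
of radius `s₀ = ‖x₀‖`; by continuity this maximum is the `s₀`-norm, and
`‖f‖_v = (1 - s₀²)‖f‖_{s₀}`. A maximiser on the unit sphere forces `‖f‖_v = 0`, and then `0`
is a maximiser as well. Conversely, a point `x₁` with `‖x₁‖ ≤ s₀` realising `‖f‖_{s₀}` gives
`(1 - s₀²)‖f‖_{s₀} ≤ (1 - ‖x₁‖²)‖f x₁‖ ≤ ‖f‖_v`. The suprema involved are finite because a
function uniformly continuous on a bounded convex set is bounded there: join any point to a
fixed one by a chain of steps shorter than the modulus of continuity.
-/

open Bornology

theorem UniformContinuousOn.isBounded_image {E F : Type*} [SeminormedAddCommGroup E]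
    [NormedSpace ℝ E] [PseudoMetricSpace F] {f : E → F} {s : Set E}
    (hf : UniformContinuousOn f s) (hconv : Convex ℝ s) (hs : IsBounded s) :
    IsBounded (f '' s) := by
  rcases s.eq_empty_or_nonempty with rfl | ⟨p, hp⟩
  · simp
  obtain ⟨δ, hδ, hfδ⟩ := Metric.uniformContinuousOn_iff.mp hf 1 one_pos
  obtain ⟨n, hn⟩ := exists_nat_gt (diam s / δ)
  have hn₀ : (0 : ℝ) < n := (div_nonneg diam_nonneg hδ.le).trans_lt hn
  refine (isBounded_iff_subset_closedBall (f p)).2 ⟨n, ?_⟩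
  rintro _ ⟨x, hx, rfl⟩
  let g : ℕ → E := fun k => AffineMap.lineMap p x ((k : ℝ) / n)
  have hg : ∀ k ≤ n, g k ∈ s := fun k hk =>
    hconv.lineMap_mem hp hx ⟨by positivity, div_le_one_of_le₀ (by exact_mod_cast hk) hn₀.le⟩
  have hstep : ∀ {k}, k < n → dist (f (g k)) (f (g (k + 1))) ≤ 1 := fun {k} hk => by
    refine (hfδ _ (hg k hk.le) _ (hg (k + 1) hk) ?_).le
    calc dist (g k) (g (k + 1)) = dist p x / n := by
          simp only [g, dist_lineMap_lineMap, Real.dist_eq]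
          rw [Nat.cast_succ, ← sub_div, sub_add_cancel_left, abs_div, abs_neg, abs_one,
            abs_of_pos hn₀]
          ring
      _ ≤ diam s / n := by gcongr; exact dist_le_diam_of_mem hs hp hx
      _ < δ := (div_lt_iff₀ hn₀).2 (by rwa [div_lt_iff₀ hδ, mul_comm] at hn)
  have hchain := dist_le_range_sum_of_dist_le (f := f ∘ g) n hstep
  simp only [Function.comp, g, Nat.cast_zero, zero_div, AffineMap.lineMap_apply_zero,
    div_self hn₀.ne', AffineMap.lineMap_apply_one, Finset.sum_const, Finset.card_range,
    nsmul_eq_mul, mul_one] at hchain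
  rw [mem_closedBall, dist_comm]
  exact hchain

section WeightedNorm

variable {X Y : Type*} [NormedAddCommGroup X] [NormedAddCommGroup Y] {f : X → Y}

def HasFiniteVNorm (f : X → Y) : Prop :=
  BddAbove ((fun x => (1 - ‖x‖ ^ 2) * ‖f x‖) '' {x : X | ‖x‖ < 1})

theorem HasFiniteVNorm.of_norm_le {C : ℝ} (h : ∀ x : X, ‖x‖ < 1 → ‖f x‖ ≤ C) :
    HasFiniteVNorm f := by
  refine ⟨C, ?_⟩
  rintro _ ⟨x, hx, rfl⟩
  have hx : ‖x‖ < 1 := hx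
  exact (mul_le_of_le_one_left (norm_nonneg _) (by nlinarith [norm_nonneg x])).trans (h x hx)

theorem le_vNorm (hf : HasFiniteVNorm f) {x : X} (hx : ‖x‖ < 1) :
    (1 - ‖x‖ ^ 2) * ‖f x‖ ≤ vNorm f :=
  le_csSup hf ⟨x, hx, rfl⟩

theorem exists_norm_lt_one_of_attainsV (hf : HasFiniteVNorm f) (h : AttainsV f) :
    ∃ x₀ : X, ‖x₀‖ < 1 ∧ (1 - ‖x₀‖ ^ 2) * ‖f x₀‖ = vNorm f := by
  obtain ⟨x₀, hx₀, hattain⟩ := h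
  rcases hx₀.lt_or_eq with hlt | hone
  · exact ⟨x₀, hlt, hattain⟩
  have hv : vNorm f = 0 := by rw [← hattain, hone]; ring
  have h0 := le_vNorm hf (x := 0) (by simp)
  refine ⟨0, by simp, ?_⟩
  simp only [norm_zero, ne_eq, OfNat.ofNat_ne_zero, not_false_eq_true, zero_pow, sub_zero,
    one_mul] at h0 ⊢
  rw [hv] at h0 ⊢
  exact le_antisymm h0 (norm_nonneg _)

theorem isMaxOn_norm_of_vNorm_eq (hf : HasFiniteVNorm f) {x₀ : X} (hx₀ : ‖x₀‖ < 1)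
    (h : (1 - ‖x₀‖ ^ 2) * ‖f x₀‖ = vNorm f) :
    IsMaxOn (fun y => ‖f y‖) (closedBall 0 ‖x₀‖) x₀ := by
  intro y hy
  rw [mem_closedBall_zero_iff] at hy
  have hweight : 0 < 1 - ‖x₀‖ ^ 2 := by nlinarith [norm_nonneg x₀]
  refine le_of_mul_le_mul_left ?_ hweight
  calc (1 - ‖x₀‖ ^ 2) * ‖f y‖ ≤ (1 - ‖y‖ ^ 2) * ‖f y‖ := by gcongr
    _ ≤ vNorm f := le_vNorm hf (hy.trans_lt hx₀)
    _ = (1 - ‖x₀‖ ^ 2) * ‖f x₀‖ := h.symm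

end WeightedNorm

section ScaledNorm

variable {X Y : Type*} [NormedAddCommGroup X] [NormedSpace ℂ X] [NormedAddCommGroup Y]
  {f : X → Y}

theorem ofReal_smul_mem_closedBall {s : ℝ} (hs : 0 ≤ s) {x : X} (hx : ‖x‖ < 1) :
    (s : ℂ) • x ∈ closedBall (0 : X) s := by
  rw [mem_closedBall_zero_iff, norm_smul, Complex.norm_real, Real.norm_of_nonneg hs]
  exact mul_le_of_le_one_right hs hx.le

/-- The `s`-norm is a supremum over the open ball of radius `s`; continuity at `x₀` is what
lets a maximiser on its boundary realise it. -/
theorem sNorm_eq_of_isMaxOn {s : ℝ} {x₀ : X} (hx₀ : ‖x₀‖ ≤ s)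
    (hmax : IsMaxOn (fun y => ‖f y‖) (closedBall 0 s) x₀) (hcont : ContinuousAt f x₀) :
    sNorm s f = ‖f x₀‖ := by
  have hs : 0 ≤ s := (norm_nonneg _).trans hx₀
  have hle : ∀ x : X, ‖x‖ < 1 → ‖f ((s : ℂ) • x)‖ ≤ ‖f x₀‖ := fun x hx =>
    hmax (ofReal_smul_mem_closedBall hs hx)
  refine le_antisymm (csSup_le ⟨_, 0, by simp, rfl⟩ ?_) ?_
  · rintro _ ⟨x, hx, rfl⟩
    exact hle x hx
  have hbdd : BddAbove ((fun x => ‖f ((s : ℂ) • x)‖) '' {x : X | ‖x‖ < 1}) := by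
    refine ⟨‖f x₀‖, ?_⟩
    rintro _ ⟨x, hx, rfl⟩
    exact hle x hx
  obtain ⟨u, hu, rfl⟩ : ∃ u ∈ closedBall (0 : X) 1, (s : ℂ) • u = x₀ := by
    rcases hs.eq_or_lt with rfl | hs₀
    · exact ⟨0, by simp, by simp [norm_le_zero_iff.mp hx₀]⟩
    refine ⟨(s : ℂ)⁻¹ • x₀, ?_, smul_inv_smul₀ (by exact_mod_cast hs₀.ne') _⟩
    rw [mem_closedBall_zero_iff, norm_smul, norm_inv, Complex.norm_real,
      Real.norm_of_nonneg hs, inv_mul_le_iff₀ hs₀, mul_one]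
    exact hx₀
  rw [← closure_ball 0 one_ne_zero, ball_zero_eq] at hu
  have hcont' : ContinuousWithinAt (fun x => ‖f ((s : ℂ) • x)‖) {x : X | ‖x‖ < 1} u :=
    (hcont.comp (continuous_const_smul _).continuousAt).norm.continuousWithinAt
  exact closure_minimal (fun _ hy => le_csSup hbdd hy) isClosed_Iic
    (hcont'.mem_closure_image hu)

theorem AttainsS.attainsV {s : ℝ} (hS : AttainsS s f) (hf : HasFiniteVNorm f) (hs : s < 1)
    (hv : vNorm f = (1 - s ^ 2) * sNorm s f) : AttainsV f := by
  obtain ⟨x₁, hx₁, hattain⟩ := hS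
  refine ⟨x₁, hx₁.trans hs.le, le_antisymm (le_vNorm hf (hx₁.trans_lt hs)) ?_⟩
  rw [hv, ← hattain]
  gcongr

end ScaledNorm

theorem stmt1_general {X Y : Type*} [NormedAddCommGroup X] [NormedSpace ℂ X]
    [NormedAddCommGroup Y] (f : X → Y)
    (hu : UniformContinuousOn f (Metric.closedBall (0 : X) 1)) :
    AttainsV f ↔
      ∃ s₀ : ℝ, 0 ≤ s₀ ∧ s₀ < 1 ∧ vNorm f = (1 - s₀ ^ 2) * sNorm s₀ f ∧ AttainsS s₀ f := by
  have hfin : HasFiniteVNorm f := by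
    obtain ⟨C, hC⟩ := isBounded_iff_forall_norm_le.1
      (hu.isBounded_image (convex_closedBall 0 1) isBounded_closedBall)
    exact .of_norm_le fun x hx => hC _ ⟨x, mem_closedBall_zero_iff.2 hx.le, rfl⟩
  constructor
  · intro h
    obtain ⟨x₀, hx₀, hattain⟩ := exists_norm_lt_one_of_attainsV hfin h
    have hcont : ContinuousAt f x₀ :=
      hu.continuousOn.continuousAt (closedBall_mem_nhds_of_mem (mem_ball_zero_iff.2 hx₀))
    have hS := sNorm_eq_of_isMaxOn le_rfl (isMaxOn_norm_of_vNorm_eq hfin hx₀ hattain) hcont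
    exact ⟨‖x₀‖, norm_nonneg _, hx₀, by rw [hS, hattain], x₀, le_rfl, hS.symm⟩
  · rintro ⟨s₀, -, hs₀, hv, hS⟩
    exact hS.attainsV hfin hs₀ hv

/-- a holomorphic function, uniformly continuous on the closed unit ball,
attains its `v`-norm iff there is `s₀ ∈ [0,1)` with `‖f‖_v = (1-s₀²)‖f‖_{s₀}` at which `f`
attains its `s₀`-norm. -/
theorem stmt1 {X Y : Type*} [NormedAddCommGroup X] [NormedSpace ℂ X] [CompleteSpace X]
    [NormedAddCommGroup Y] [NormedSpace ℂ Y] [CompleteSpace Y]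
    (f : X → Y) (hf : DifferentiableOn ℂ f (Metric.ball (0 : X) 1))
    (hu : UniformContinuousOn f (Metric.closedBall (0 : X) 1)) :
    AttainsV f ↔
      ∃ s₀ : ℝ, 0 ≤ s₀ ∧ s₀ < 1 ∧ vNorm f = (1 - s₀ ^ 2) * sNorm s₀ f ∧ AttainsS s₀ f :=
  stmt1_general f hu
end

section
/- Let X be a reflexive complex Banach space, i.e. the canonical isometric embedding of X into its bidual is surjective. Let f : X → ℂ be bounded on the open unit ball B_X and weakly sequentially continuous, i.e. for every sequence (xₙ) in X and every x ∈ X such that φ(xₙ) → φ(x) for every continuous linear functional φ on X, one has f(xₙ) → f(x). Then for every s ∈ (0,1] there exists x₀ with ‖x₀‖ ≤ s and |f(x₀)| = ‖f‖_s. Moreover, f attains its v-norm: there exists x₀ with ‖x₀‖ ≤ 1 and (1 − ‖x₀‖²)|f(x₀)| = ‖f‖_v. -/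
open Filter Topology Metric

open NormedSpace TopologicalSpace in
/-- Hahn–Banach annihilator: a functional vanishing on a closed subspace,
nonzero at a point outside it. -/
lemma exists_dual_annihilator {X : Type*} [NormedAddCommGroup X] [NormedSpace ℂ X]
    (Y : Submodule ℂ X) (hY : IsClosed (Y : Set X)) {x : X} (hx : x ∉ Y) :
    ∃ φ : X →L[ℂ] ℂ, (∀ y ∈ Y, φ y = 0) ∧ φ x ≠ 0 := by
  haveI : IsClosed (Y : Set X) := hY
  set Q := X ⧸ Y
  have hxq : (Submodule.Quotient.mk x : Q) ≠ 0 := by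
    simpa [Submodule.Quotient.mk_eq_zero] using hx
  obtain ⟨g, hg1, hgx⟩ := exists_dual_vector ℂ (Submodule.Quotient.mk x : Q) (norm_ne_zero_iff.mpr hxq)
  let mkc : X →L[ℂ] Q := LinearMap.mkContinuous Y.mkQ 1 (fun m => by
    rw [one_mul]; exact Submodule.Quotient.norm_mk_le Y m)
  refine ⟨g.comp mkc, ?_, ?_⟩
  · intro y hy
    have : mkc y = 0 := (Submodule.Quotient.mk_eq_zero Y).mpr hy
    simp [ContinuousLinearMap.comp_apply, this]
  · have : g (Submodule.Quotient.mk x : Q) ≠ 0 := by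
      rw [hgx]
      simpa using norm_ne_zero_iff.mpr hxq
    exact this

open NormedSpace TopologicalSpace in
/-- If the dual of a normed space is separable, so is the space. -/
lemma separableSpace_of_dual_separable {Z : Type*} [NormedAddCommGroup Z] [NormedSpace ℂ Z]
    [h : SeparableSpace (StrongDual ℂ Z)] : SeparableSpace Z := by
  obtain ⟨u, hu⟩ := exists_dense_seq (StrongDual ℂ Z)
  have hz : ∀ m : ℕ, ∃ z : Z, ‖z‖ ≤ 1 ∧ ‖u m‖ / 2 ≤ ‖u m z‖ := by
    intro m
    by_cases h0 : u m = 0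
    · exact ⟨0, by simp [h0]⟩
    · have hlt : ‖u m‖ / 2 < ‖u m‖ := by
        have : 0 < ‖u m‖ := norm_pos_iff.mpr h0
        linarith
      obtain ⟨z, hz1, hz2⟩ := (u m).exists_lt_apply_of_lt_opNorm hlt
      exact ⟨z, hz1.le, hz2.le⟩
  choose z hz1 hz2 using hz
  set W := (Submodule.span ℂ (Set.range z)).topologicalClosure with hW
  have hWa : ∀ zz : Z, zz ∈ W := by
    intro zz
    by_contra hzz
    obtain ⟨φ, hφW, hφz⟩ := exists_dual_annihilator W (Submodule.span ℂ (Set.range z)).isClosed_topologicalClosure hzz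
    have hφ0 : φ ≠ 0 := fun h => hφz (by simp [h])
    set ψ : StrongDual ℂ Z := (‖φ‖ : ℂ)⁻¹ • φ with hψ
    have hψ1 : ‖ψ‖ = 1 := by
      rw [hψ, norm_smul]
      simp [norm_pos_iff.mpr hφ0, ne_of_gt (norm_pos_iff.mpr hφ0)]
    have hψW : ∀ y ∈ W, ψ y = 0 := by
      intro y hy; simp [hψ, hφW y hy]
    obtain ⟨m, hm⟩ := hu.exists_dist_lt ψ (by norm_num : (0:ℝ) < 1/4)
    have hzmW : z m ∈ W := Submodule.le_topologicalClosure _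
      (Submodule.subset_span (Set.mem_range_self m))
    have key : ‖u m (z m)‖ < 1/4 := by
      have : u m (z m) = (u m - ψ) (z m) := by simp [hψW _ hzmW]
      rw [this]
      calc ‖(u m - ψ) (z m)‖ ≤ ‖u m - ψ‖ * ‖z m‖ := (u m - ψ).le_opNorm _
        _ ≤ ‖u m - ψ‖ * 1 := by
            exact mul_le_mul_of_nonneg_left (hz1 m) (norm_nonneg _)
        _ < 1/4 := by rw [mul_one, ← dist_eq_norm, dist_comm]; exact hm
    have hn : 3/4 < ‖u m‖ := by
      have : ‖ψ‖ - ‖u m‖ ≤ ‖u m - ψ‖ := by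
        rw [norm_sub_rev]; exact norm_sub_norm_le _ _
      have h2 : ‖u m - ψ‖ < 1/4 := by rw [← dist_eq_norm, dist_comm]; exact hm
      rw [hψ1] at this; linarith
    have := (hz2 m).trans key.le
    linarith
  have : IsSeparable (W : Set Z) :=
    ((Set.countable_range z).isSeparable.span).closure
  have huniv : IsSeparable (Set.univ : Set Z) := by
    refine this.mono fun zz _ => hWa zz
  exact isSeparable_univ_iff.mp huniv

open NormedSpace TopologicalSpace in
set_option maxHeartbeats 1000000 in
/-- Weak sequential compactness of bounded sequences in a reflexive space. -/
lemma weak_seq_subseq {X : Type*} [NormedAddCommGroup X] [NormedSpace ℂ X] [CompleteSpace X]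
    (hrefl : Function.Surjective (inclusionInDoubleDual ℂ X))
    (x : ℕ → X) (R : ℝ) (hR : ∀ n, ‖x n‖ ≤ R) :
    ∃ (y : X) (φ : ℕ → ℕ), StrictMono φ ∧ ‖y‖ ≤ R ∧
      ∀ ψ : X →L[ℂ] ℂ, Tendsto (fun j => ψ (x (φ j))) atTop (𝓝 (ψ y)) := by
  classical
  have hRnn : 0 ≤ R := le_trans (norm_nonneg _) (hR 0)
  set S := Submodule.span ℂ (Set.range x) with hS
  set Y := S.topologicalClosure with hYdef
  have hYc : IsClosed (Y : Set X) := S.isClosed_topologicalClosure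
  have hmemY : ∀ n, x n ∈ Y := fun n =>
    Submodule.le_topologicalClosure S (Submodule.subset_span (Set.mem_range_self n))
  set yseq : ℕ → Y := fun n => ⟨x n, hmemY n⟩ with hyseq
  haveI : SeparableSpace Y := by
    have : IsSeparable (Y : Set X) := ((Set.countable_range x).isSeparable.span).closure
    exact this.separableSpace
  -- restriction map
  set r : StrongDual ℂ X →L[ℂ] StrongDual ℂ Y := (ContinuousLinearMap.compL ℂ Y X ℂ).flip Y.subtypeL
    with hrdef
  have hr : ∀ (ψx : StrongDual ℂ X) (yy : Y), r ψx yy = ψx (yy : X) := fun _ _ => rfl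
  -- Y is reflexive
  have JYsurj : Function.Surjective (inclusionInDoubleDual ℂ Y) := by
    intro F
    set G : StrongDual ℂ (StrongDual ℂ X) := F.comp r with hG
    obtain ⟨x₀, hx₀⟩ := hrefl G
    have hx₀Y : x₀ ∈ Y := by
      by_contra hxY
      obtain ⟨ψx, hψ1, hψ2⟩ := exists_dual_annihilator Y hYc hxY
      have h2 : r ψx = 0 := by
        ext yy
        simp [hr, hψ1 (yy : X) yy.2]
      have h1 : ψx x₀ = G ψx := by rw [← hx₀]; rfl
      rw [h1, hG] at hψ2
      exact hψ2 (by simp [ContinuousLinearMap.comp_apply, h2])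
    refine ⟨⟨x₀, hx₀Y⟩, ?_⟩
    ext ψ
    obtain ⟨g, hg1, -⟩ := exists_extension_norm_eq Y ψ
    have hrg : r g = ψ := by
      ext yy
      rw [hr]
      exact hg1 yy
    have hgx : g x₀ = G g := by rw [← hx₀]; rfl
    calc inclusionInDoubleDual ℂ Y ⟨x₀, hx₀Y⟩ ψ = ψ ⟨x₀, hx₀Y⟩ := rfl
      _ = g x₀ := (hg1 ⟨x₀, hx₀Y⟩).symm
      _ = G g := hgx
      _ = F (r g) := rfl
      _ = F ψ := by rw [hrg]
  haveI : SeparableSpace (StrongDual ℂ (StrongDual ℂ Y)) :=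
    JYsurj.denseRange.separableSpace (inclusionInDoubleDual ℂ Y).continuous
  haveI : SeparableSpace (StrongDual ℂ Y) := separableSpace_of_dual_separable (Z := StrongDual ℂ Y)
  haveI : Nonempty (StrongDual ℂ Y) := ⟨0⟩
  obtain ⟨ψs, hψs⟩ := exists_dense_seq (StrongDual ℂ Y)
  have hynorm : ∀ n, ‖yseq n‖ ≤ R := fun n => hR n
  -- diagonal extraction via compact metrizable product
  set K : Set (ℕ → ℂ) := Set.univ.pi fun k => closedBall 0 (‖ψs k‖ * R) with hKdef
  have hK : IsCompact K := isCompact_univ_pi fun k => isCompact_closedBall _ _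
  have hmem : ∀ n, (fun k => ψs k (yseq n)) ∈ K := by
    intro n
    rw [Set.mem_univ_pi]
    intro k
    rw [mem_closedBall_zero_iff]
    calc ‖ψs k (yseq n)‖ ≤ ‖ψs k‖ * ‖yseq n‖ := (ψs k).le_opNorm _
      _ ≤ ‖ψs k‖ * R := mul_le_mul_of_nonneg_left (hynorm n) (by exact norm_nonneg (ψs k))
  obtain ⟨c, -, φ, hφmono, hφtend⟩ := hK.tendsto_subseq hmem
  rw [tendsto_pi_nhds] at hφtend
  -- all functionals converge along the subsequence
  have hconv : ∀ ψ : StrongDual ℂ Y, ∃ L, Tendsto (fun j => ψ (yseq (φ j))) atTop (𝓝 L) := by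
    intro ψ
    have hc : CauchySeq fun j => ψ (yseq (φ j)) := by
      rw [Metric.cauchySeq_iff]
      intro ε hε
      have hε3 : 0 < ε / (3 * (R + 1)) := by positivity
      obtain ⟨k, hk⟩ := hψs.exists_dist_lt ψ hε3
      have hkc : CauchySeq fun j => ψs k (yseq (φ j)) := (hφtend k).cauchySeq
      rw [Metric.cauchySeq_iff] at hkc
      obtain ⟨N, hN⟩ := hkc (ε / 3) (by positivity)
      refine ⟨N, fun m hm n hn => ?_⟩
      have bound : ∀ j, dist (ψ (yseq (φ j))) (ψs k (yseq (φ j))) ≤ ε / 3 := by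
        intro j
        rw [dist_eq_norm]
        have he : ψ (yseq (φ j)) - ψs k (yseq (φ j)) = (ψ - ψs k) (yseq (φ j)) := by simp
        rw [he]
        have h1 : ‖ψ - ψs k‖ ≤ ε / (3 * (R + 1)) := by
          exact (dist_eq_norm ψ (ψs k)).symm.le.trans hk.le
        calc ‖(ψ - ψs k) (yseq (φ j))‖ ≤ ‖ψ - ψs k‖ * ‖yseq (φ j)‖ := (ψ - ψs k).le_opNorm _
          _ ≤ (ε / (3 * (R + 1))) * (R + 1) := by
              apply mul_le_mul h1 ((hynorm _).trans (by linarith)) (norm_nonneg _) hε3.le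
          _ = ε / 3 := by field_simp
      calc dist (ψ (yseq (φ m))) (ψ (yseq (φ n)))
          ≤ dist (ψ (yseq (φ m))) (ψs k (yseq (φ m)))
            + dist (ψs k (yseq (φ m))) (ψs k (yseq (φ n)))
            + dist (ψs k (yseq (φ n))) (ψ (yseq (φ n))) := dist_triangle4 _ _ _ _
        _ < ε / 3 + ε / 3 + ε / 3 := by
            have b1 := bound m
            have b2 := hN m hm n hn
            have b3 := bound n
            rw [dist_comm] at b3
            linarith
        _ = ε := by ring
    exact cauchySeq_tendsto_of_complete hc
  choose L hL using hconv
  have hLt : Tendsto (fun j ψ => (inclusionInDoubleDual ℂ Y (yseq (φ j))) ψ) atTop (𝓝 L) := by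
    rw [tendsto_pi_nhds]
    intro ψ
    simpa [dual_def] using hL ψ
  haveI : BaireSpace (StrongDual ℂ Y) := @BaireSpace.of_completelyPseudoMetrizable _ _
    (@TopologicalSpace.IsCompletelyPseudoMetrizableSpace.of_completeSpace_pseudometrizable _ _ inferInstance
      (by exact EMetric.instIsCountablyGeneratedUniformity (α := StrongDual ℂ Y)))
  set F : StrongDual ℂ (StrongDual ℂ Y) := continuousLinearMapOfTendsto _ hLt with hFdef
  have hF : ∀ ψ, F ψ = L ψ := fun ψ => rfl
  obtain ⟨y₀, hy₀⟩ := JYsurj F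
  refine ⟨(y₀ : X), φ, hφmono, ?_, ?_⟩
  · -- norm bound
    by_cases hy0 : (y₀ : X) = 0
    · rw [hy0]; simpa using hRnn
    · obtain ⟨g, hg1, hg2⟩ := exists_dual_vector ℂ (y₀ : X) (norm_ne_zero_iff.mpr hy0)
      have hyval : (r g) y₀ = L (r g) := by
        rw [← hF]
        rw [← hy₀]
        rfl
      have htd : Tendsto (fun j => ‖g (x (φ j))‖) atTop (𝓝 ‖g (y₀ : X)‖) := by
        have := hL (r g)
        rw [← hyval] at this
        have h2 : ∀ j, (r g) (yseq (φ j)) = g (x (φ j)) := fun j => rfl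
        simp only [h2, hr] at this
        exact this.norm
      have hle : ∀ j, ‖g (x (φ j))‖ ≤ R := by
        intro j
        calc ‖g (x (φ j))‖ ≤ ‖g‖ * ‖x (φ j)‖ := g.le_opNorm _
          _ ≤ R := by rw [hg1, one_mul]; exact hR _
      have : ‖g (y₀ : X)‖ ≤ R := le_of_tendsto htd (Eventually.of_forall hle)
      rwa [hg2, RCLike.norm_ofReal, abs_of_nonneg (norm_nonneg _)] at this
  · intro ψx
    have h2 : (r ψx) y₀ = L (r ψx) := by rw [← hF, ← hy₀]; rfl
    have h3 : Tendsto (fun j => (r ψx) (yseq (φ j))) atTop (𝓝 ((r ψx) y₀)) := by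
      rw [h2]; exact hL (r ψx)
    rw [show (fun j => ψx (x (φ j))) = fun j => (r ψx) (yseq (φ j)) from
        funext fun j => (hr ψx (yseq (φ j))).symm,
      show ψx (y₀ : X) = (r ψx) y₀ from (hr ψx y₀).symm]
    exact h3

open NormedSpace TopologicalSpace in
/-- Norm bound along a weakly convergent sequence. -/
lemma norm_le_of_weak {X : Type*} [NormedAddCommGroup X] [NormedSpace ℂ X]
    (u : ℕ → X) (y : X) (t : ℝ) (ht : 0 ≤ t)
    (hweak : ∀ ψ : X →L[ℂ] ℂ, Tendsto (fun j => ψ (u j)) atTop (𝓝 (ψ y)))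
    (hn : Tendsto (fun j => ‖u j‖) atTop (𝓝 t)) : ‖y‖ ≤ t := by
  rcases eq_or_ne y 0 with h | h
  · simpa [h] using ht
  · obtain ⟨g, hg1, hg2⟩ := exists_dual_vector ℂ y (norm_ne_zero_iff.mpr h)
    have h1 : Tendsto (fun j => ‖g (u j)‖) atTop (𝓝 ‖g y‖) := (hweak g).norm
    have h2 : ∀ j, ‖g (u j)‖ ≤ ‖u j‖ := fun j => by
      calc ‖g (u j)‖ ≤ ‖g‖ * ‖u j‖ := g.le_opNorm _
        _ = ‖u j‖ := by rw [hg1, one_mul]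
    have := le_of_tendsto_of_tendsto' h1 hn h2
    rwa [hg2, RCLike.norm_ofReal, abs_of_nonneg (norm_nonneg _)] at this

/-- on a reflexive space, every weakly sequentially continuous function that is
bounded on the open unit ball attains all its `s`-norms, and its `v`-norm. -/
theorem stmt2 {X : Type*} [NormedAddCommGroup X] [NormedSpace ℂ X] [CompleteSpace X]
    (hrefl : Function.Surjective (NormedSpace.inclusionInDoubleDual ℂ X))
    (f : X → ℂ)
    (hb : ∃ C : ℝ, ∀ x : X, ‖x‖ < 1 → ‖f x‖ ≤ C)
    (hwsc : ∀ (u : ℕ → X) (x : X),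
      (∀ φ : X →L[ℂ] ℂ, Tendsto (fun n => φ (u n)) atTop (𝓝 (φ x))) →
      Tendsto (fun n => f (u n)) atTop (𝓝 (f x))) :
    (∀ s : ℝ, 0 < s → s ≤ 1 → AttainsS s f) ∧ AttainsV f := by
  obtain ⟨C, hC⟩ := hb
  have hone : Tendsto (fun n : ℕ => (1 : ℝ) / (n + 1)) atTop (𝓝 0) :=
    tendsto_one_div_add_atTop_nhds_zero_nat
  constructor
  · intro s hs0 hs1
    set A := ((fun x : X => ‖f ((s : ℂ) • x)‖) '' {x : X | ‖x‖ < 1}) with hA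
    have hAne : A.Nonempty := ⟨‖f ((s : ℂ) • (0 : X))‖, ⟨0, by simp, rfl⟩⟩
    have hnorms : ∀ x : X, ‖(s : ℂ) • x‖ = s * ‖x‖ := by
      intro x
      rw [norm_smul, Complex.norm_real, Real.norm_eq_abs, abs_of_pos hs0]
    have hsmem : ∀ x : X, ‖x‖ < 1 → ‖(s : ℂ) • x‖ < 1 := by
      intro x hx
      rw [hnorms]
      calc s * ‖x‖ ≤ 1 * ‖x‖ := mul_le_mul_of_nonneg_right hs1 (norm_nonneg _)
        _ = ‖x‖ := one_mul _
        _ < 1 := hx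
    have hbd : BddAbove A := by
      refine ⟨C, fun a ha => ?_⟩
      obtain ⟨xx, hxx, rfl⟩ := ha
      exact hC _ (hsmem xx hxx)
    have hu : ∀ n : ℕ, ∃ xx : X, ‖xx‖ < 1 ∧ sSup A - 1 / (n + 1) < ‖f ((s : ℂ) • xx)‖ := by
      intro n
      have hlt : sSup A - 1 / (n + 1) < sSup A := by
        have : (0 : ℝ) < 1 / (n + 1) := by positivity
        linarith
      obtain ⟨a, ⟨xx, hxx, rfl⟩, ha⟩ := exists_lt_of_lt_csSup hAne hlt
      exact ⟨xx, hxx, ha⟩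
    choose u hu1 hu2 using hu
    have hulim : Tendsto (fun n => ‖f ((s : ℂ) • u n)‖) atTop (𝓝 (sSup A)) := by
      have h1 : Tendsto (fun n : ℕ => sSup A - 1 / (n + 1)) atTop (𝓝 (sSup A)) := by
        simpa using tendsto_const_nhds.sub hone
      exact tendsto_of_tendsto_of_tendsto_of_le_of_le h1 tendsto_const_nhds
        (fun n => (hu2 n).le) (fun n => le_csSup hbd ⟨u n, hu1 n, rfl⟩)
    obtain ⟨y, φ, hφ, hyR, hweak⟩ := weak_seq_subseq hrefl (fun n => (s : ℂ) • u n) s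
      (fun n => by
        rw [hnorms]
        calc s * ‖u n‖ ≤ s * 1 := mul_le_mul_of_nonneg_left (hu1 n).le hs0.le
          _ = s := mul_one s)
    have hfy : Tendsto (fun j => f ((s : ℂ) • u (φ j))) atTop (𝓝 (f y)) := hwsc _ y hweak
    have h2 : Tendsto (fun j => ‖f ((s : ℂ) • u (φ j))‖) atTop (𝓝 (sSup A)) :=
      hulim.comp hφ.tendsto_atTop
    exact ⟨y, hyR, tendsto_nhds_unique hfy.norm h2⟩
  · set B := ((fun x : X => (1 - ‖x‖ ^ 2) * ‖f x‖) '' {x : X | ‖x‖ < 1}) with hB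
    have hBne : B.Nonempty := ⟨(1 - ‖(0 : X)‖ ^ 2) * ‖f 0‖, ⟨0, by simp, rfl⟩⟩
    have hC0 : 0 ≤ C := le_trans (norm_nonneg _) (hC 0 (by simp))
    have hbd : BddAbove B := by
      refine ⟨C, fun a ha => ?_⟩
      obtain ⟨xx, hxx, rfl⟩ := ha
      have h1 : 1 - ‖xx‖ ^ 2 ≤ 1 := by nlinarith [norm_nonneg xx]
      have h0 : 0 ≤ 1 - ‖xx‖ ^ 2 := by nlinarith [norm_nonneg xx, show ‖xx‖ < 1 from hxx]
      calc (1 - ‖xx‖ ^ 2) * ‖f xx‖ ≤ 1 * C :=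
            mul_le_mul h1 (hC _ hxx) (norm_nonneg _) zero_le_one
        _ = C := one_mul C
    have hu : ∀ n : ℕ, ∃ xx : X, ‖xx‖ < 1 ∧
        sSup B - 1 / (n + 1) < (1 - ‖xx‖ ^ 2) * ‖f xx‖ := by
      intro n
      have hlt : sSup B - 1 / (n + 1) < sSup B := by
        have : (0 : ℝ) < 1 / (n + 1) := by positivity
        linarith
      obtain ⟨a, ⟨xx, hxx, rfl⟩, ha⟩ := exists_lt_of_lt_csSup hBne hlt
      exact ⟨xx, hxx, ha⟩
    choose u hu1 hu2 using hu
    have hulim : Tendsto (fun n => (1 - ‖u n‖ ^ 2) * ‖f (u n)‖) atTop (𝓝 (sSup B)) := by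
      have h1 : Tendsto (fun n : ℕ => sSup B - 1 / (n + 1)) atTop (𝓝 (sSup B)) := by
        simpa using tendsto_const_nhds.sub hone
      exact tendsto_of_tendsto_of_tendsto_of_le_of_le h1 tendsto_const_nhds
        (fun n => (hu2 n).le) (fun n => le_csSup hbd ⟨u n, hu1 n, rfl⟩)
    obtain ⟨y, φ, hφ, hy1, hweak⟩ := weak_seq_subseq hrefl u 1 (fun n => (hu1 n).le)
    have hIcc : ∀ j, ‖u (φ j)‖ ∈ Set.Icc (0 : ℝ) 1 :=
      fun j => ⟨norm_nonneg _, (hu1 _).le⟩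
    obtain ⟨t, htIcc, φ₂, hφ₂, htend⟩ := isCompact_Icc.tendsto_subseq hIcc
    have hweak2 : ∀ ψ : X →L[ℂ] ℂ,
        Tendsto (fun j => ψ (u (φ (φ₂ j)))) atTop (𝓝 (ψ y)) :=
      fun ψ => (hweak ψ).comp hφ₂.tendsto_atTop
    have hfy : Tendsto (fun j => f (u (φ (φ₂ j)))) atTop (𝓝 (f y)) := hwsc _ y hweak2
    have htend' : Tendsto (fun j => ‖u (φ (φ₂ j))‖) atTop (𝓝 t) := htend
    have hval : Tendsto (fun j => (1 - ‖u (φ (φ₂ j))‖ ^ 2) * ‖f (u (φ (φ₂ j)))‖) atTop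
        (𝓝 ((1 - t ^ 2) * ‖f y‖)) :=
      (tendsto_const_nhds.sub (htend'.pow 2)).mul hfy.norm
    have hval2 : Tendsto (fun j => (1 - ‖u (φ (φ₂ j))‖ ^ 2) * ‖f (u (φ (φ₂ j)))‖) atTop
        (𝓝 (sSup B)) := hulim.comp ((hφ.comp hφ₂).tendsto_atTop)
    have hMeq : (1 - t ^ 2) * ‖f y‖ = sSup B := tendsto_nhds_unique hval hval2
    have hyt : ‖y‖ ≤ t := norm_le_of_weak _ y t htIcc.1 hweak2 htend'
    have hvB : vNorm f = sSup B := by unfold vNorm; rw [hB]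
    by_cases hylt : ‖y‖ < 1
    · refine ⟨y, hy1, ?_⟩
      have hle : (1 - ‖y‖ ^ 2) * ‖f y‖ ≤ sSup B := le_csSup hbd ⟨y, hylt, rfl⟩
      have hge : sSup B ≤ (1 - ‖y‖ ^ 2) * ‖f y‖ := by
        rw [← hMeq]
        apply mul_le_mul_of_nonneg_right _ (norm_nonneg _)
        nlinarith [norm_nonneg y]
      rw [hvB]
      exact le_antisymm hle hge
    · have hy1' : ‖y‖ = 1 := le_antisymm hy1 (not_lt.mp hylt)
      have ht1 : t = 1 := le_antisymm htIcc.2 (hy1' ▸ hyt)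
      refine ⟨y, hy1, ?_⟩
      rw [hvB, ← hMeq, hy1', ht1]
end

section
/- Let X and Y be complex Banach spaces, N ≥ 1 a natural number, and set δ_N := (N/(N+2))^{N/2} − (N/(N+2))^{(N+2)/2}. Then δ_N ∈ (0,1), δ_N → 0 as N → ∞, and for every continuous N-homogeneous polynomial P : X → Y and every s ∈ (0,1] one has ‖P‖_v = (δ_N / s^N) · ‖P‖_s. -/
open Filter Topology Metric

lemma aux_delta_eq (M : ℕ) :
    ((M:ℝ)/(M+2)) ^ ((M:ℝ)/2) - ((M:ℝ)/(M+2)) ^ (((M:ℝ)+2)/2)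
      = ((M:ℝ)/(M+2)) ^ ((M:ℝ)/2) * (1 - (M:ℝ)/(M+2)) := by
  set a : ℝ := (M:ℝ)/(M+2) with ha
  have h : a ^ (((M:ℝ)+2)/2) = a ^ ((M:ℝ)/2) * a := by
    rcases Nat.eq_zero_or_pos M with h0 | h0
    · subst h0
      norm_num [ha]
    · have hapos : 0 < a := by
        apply div_pos (by exact_mod_cast h0) (by positivity)
      rw [show ((M:ℝ)+2)/2 = (M:ℝ)/2 + 1 by ring, Real.rpow_add hapos, Real.rpow_one]
  rw [h]; ring

lemma aux_amgm (N : ℕ) (hN : 1 ≤ N) {u : ℝ} (hu0 : 0 ≤ u) (hu1 : u ≤ 1) :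
    (1 - u) * u ^ ((N:ℝ)/2) ≤ (1 - (N:ℝ)/(N+2)) * ((N:ℝ)/(N+2)) ^ ((N:ℝ)/2) := by
  set a : ℝ := (N:ℝ)/(N+2) with ha
  have hNpos : (0:ℝ) < N := by exact_mod_cast hN
  have hapos : 0 < a := by positivity
  have halt1 : a < 1 := by
    rw [ha, div_lt_one (by positivity)]; linarith
  have h1apos : 0 < 1 - a := by linarith
  have hu1' : 0 ≤ 1 - u := by linarith
  have hp2 : 0 ≤ (1-u)/(1-a) := div_nonneg hu1' h1apos.le
  have hp1 : 0 ≤ u/a := div_nonneg hu0 hapos.le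
  have hg := Real.geom_mean_le_arith_mean2_weighted hapos.le h1apos.le
    hp1 hp2 (by ring)
  have hsum : a * (u/a) + (1-a) * ((1-u)/(1-a)) = 1 := by
    rw [mul_div_cancel₀ _ (ne_of_gt hapos), mul_div_cancel₀ _ (ne_of_gt h1apos)]; ring
  rw [hsum] at hg
  have hq : (0:ℝ) ≤ ((N:ℝ)+2)/2 := by positivity
  have hbase : (0:ℝ) ≤ (u/a) ^ a * ((1-u)/(1-a)) ^ (1-a) := by
    exact mul_nonneg (Real.rpow_nonneg hp1 _) (Real.rpow_nonneg hp2 _)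
  have h2 := Real.rpow_le_one hbase hg hq
  rw [Real.mul_rpow (Real.rpow_nonneg hp1 _) (Real.rpow_nonneg hp2 _),
    ← Real.rpow_mul hp1, ← Real.rpow_mul hp2] at h2
  have he1 : a * (((N:ℝ)+2)/2) = (N:ℝ)/2 := by
    rw [ha]; field_simp
  have he2 : (1-a) * (((N:ℝ)+2)/2) = 1 := by
    have : (1:ℝ) - a = 2/((N:ℝ)+2) := by rw [ha]; field_simp; ring
    rw [this]; field_simp
  rw [he1, he2, Real.rpow_one, Real.div_rpow hu0 hapos.le] at h2
  have hap : 0 < a ^ ((N:ℝ)/2) := Real.rpow_pos_of_pos hapos _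
  rw [div_mul_div_comm, div_le_one (by positivity)] at h2
  nlinarith [h2]

set_option maxHeartbeats 1000000 in
/-- `δ_N ∈ (0,1)`, `δ_N → 0`, and `‖P‖_v = (δ_N / s^N)‖P‖_s` for every
continuous `N`-homogeneous polynomial `P` and every `s ∈ (0,1]`. -/
theorem stmt3 {X Y : Type*} [NormedAddCommGroup X] [NormedSpace ℂ X] [CompleteSpace X]
    [NormedAddCommGroup Y] [NormedSpace ℂ Y] [CompleteSpace Y]
    (N : ℕ) (hN : 1 ≤ N) :
    (((N : ℝ) / (N + 2)) ^ ((N : ℝ) / 2) - ((N : ℝ) / (N + 2)) ^ (((N : ℝ) + 2) / 2)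
      ∈ Set.Ioo (0 : ℝ) 1) ∧
    Tendsto (fun M : ℕ =>
        ((M : ℝ) / (M + 2)) ^ ((M : ℝ) / 2) - ((M : ℝ) / (M + 2)) ^ (((M : ℝ) + 2) / 2))
      atTop (𝓝 0) ∧
    ∀ P : X → Y, IsHomPoly N P → ∀ s : ℝ, 0 < s → s ≤ 1 →
      vNorm P =
        ((((N : ℝ) / (N + 2)) ^ ((N : ℝ) / 2) - ((N : ℝ) / (N + 2)) ^ (((N : ℝ) + 2) / 2))
          / s ^ N) * sNorm s P := by
  refine ⟨?_, ?_, ?_⟩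
  · -- part 1
    have hNpos : (0:ℝ) < N := by exact_mod_cast hN
    set a : ℝ := (N:ℝ)/((N:ℝ)+2) with ha
    have hapos : 0 < a := by positivity
    have halt1 : a < 1 := by rw [ha, div_lt_one (by positivity)]; linarith
    have hd : a ^ ((N:ℝ)/2) - a ^ (((N:ℝ)+2)/2) = a ^ ((N:ℝ)/2) * (1 - a) := by
      rw [show ((N:ℝ)+2)/2 = (N:ℝ)/2 + 1 by ring, Real.rpow_add hapos, Real.rpow_one]
      ring
    rw [hd]
    constructor
    · exact mul_pos (Real.rpow_pos_of_pos hapos _) (by linarith)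
    · have h1 : a ^ ((N:ℝ)/2) ≤ 1 := Real.rpow_le_one hapos.le halt1.le (by positivity)
      nlinarith [Real.rpow_pos_of_pos hapos ((N:ℝ)/2)]
  · -- part 2
    have key : ∀ M : ℕ, (0:ℝ) ≤ ((M:ℝ)/(M+2)) ^ ((M:ℝ)/2) * (1 - (M:ℝ)/(M+2)) ∧
        ((M:ℝ)/(M+2)) ^ ((M:ℝ)/2) * (1 - (M:ℝ)/(M+2)) ≤ 2/((M:ℝ)+2) := by
      intro M
      have hapos : (0:ℝ) ≤ (M:ℝ)/(M+2) := by positivity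
      have halt1 : (M:ℝ)/(M+2) ≤ 1 := by
        rw [div_le_one (by positivity)]; linarith
      have h1a : 1 - (M:ℝ)/(M+2) = 2/((M:ℝ)+2) := by
        field_simp
        ring
      have hle1 : ((M:ℝ)/(M+2)) ^ ((M:ℝ)/2) ≤ 1 :=
        Real.rpow_le_one hapos halt1 (by positivity)
      constructor
      · exact mul_nonneg (Real.rpow_nonneg hapos _) (by linarith)
      · rw [h1a]
        calc ((M:ℝ)/(M+2)) ^ ((M:ℝ)/2) * (2/((M:ℝ)+2)) ≤ 1 * (2/((M:ℝ)+2)) := by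
              apply mul_le_mul_of_nonneg_right hle1 (by positivity)
          _ = 2/((M:ℝ)+2) := one_mul _
    apply squeeze_zero (g := fun M : ℕ => 2/((M:ℝ)+2))
    · intro M; rw [aux_delta_eq]; exact (key M).1
    · intro M; rw [aux_delta_eq]; exact (key M).2
    · have h : Tendsto (fun M : ℕ => (M:ℝ)+2) atTop atTop :=
        tendsto_natCast_atTop_atTop.atTop_add tendsto_const_nhds
      simpa [div_eq_mul_inv] using h.inv_tendsto_atTop.const_mul (2:ℝ)
  · -- part 3
      have hNne : N ≠ 0 := Nat.one_le_iff_ne_zero.mp hN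
      have hNpos : (0:ℝ) < N := by exact_mod_cast hN
      set a : ℝ := (N:ℝ)/((N:ℝ)+2) with ha
      have hapos : 0 < a := by positivity
      have halt1 : a < 1 := by rw [ha, div_lt_one (by positivity)]; linarith
      set δ : ℝ := a ^ ((N:ℝ)/2) - a ^ (((N:ℝ)+2)/2) with hδ
      have hδeq : δ = a ^ ((N:ℝ)/2) * (1 - a) := aux_delta_eq N
      have hδpos : 0 < δ := by
        rw [hδeq]; exact mul_pos (Real.rpow_pos_of_pos hapos _) (by linarith)
      -- sqrt facts
      set t : ℝ := Real.sqrt a with htdef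
      have ht0 : 0 < t := Real.sqrt_pos.mpr hapos
      have ht2 : t ^ 2 = a := Real.sq_sqrt hapos.le
      have ht1 : t < 1 := by nlinarith
      have htN : t ^ N = a ^ ((N:ℝ)/2) := by
        rw [htdef, Real.sqrt_eq_rpow, ← Real.rpow_natCast (a ^ ((1:ℝ)/2)) N,
          ← Real.rpow_mul hapos.le]
        norm_num
        congr 1
        ring
      intro P hP s hs0 hs1
      obtain ⟨A, hA⟩ := hP
      have hsmul : ∀ (c : ℂ) (x : X), P (c • x) = c ^ N • P x := by
        intro c x
        rw [hA, hA]
        have := A.map_smul_univ (fun _ => c) (fun _ => x)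
        simpa [Finset.prod_const] using this
      have hnorm : ∀ (c : ℂ) (x : X), ‖P (c • x)‖ = ‖c‖ ^ N * ‖P x‖ := by
        intro c x; rw [hsmul, norm_smul, norm_pow]
      have hP0 : P 0 = 0 := by
        have h := hsmul 0 0
        simpa [zero_pow hNne] using h
      have hPbd : ∀ x : X, ‖x‖ ≤ 1 → ‖P x‖ ≤ ‖A‖ := by
        intro x hx
        rw [hA]
        calc ‖A fun _ => x‖ ≤ ‖A‖ * ∏ _i : Fin N, ‖x‖ := A.le_opNorm _
          _ = ‖A‖ * ‖x‖ ^ N := by simp [Finset.prod_const]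
          _ ≤ ‖A‖ * 1 :=
              mul_le_mul_of_nonneg_left (pow_le_one₀ (norm_nonneg x) hx) (norm_nonneg A)
          _ = ‖A‖ := mul_one _
      set S : Set ℝ := (fun x => ‖P x‖) '' {x : X | ‖x‖ < 1} with hSdef
      have hSne : S.Nonempty := ⟨‖P 0‖, 0, by simp, rfl⟩
      have hSbdd : BddAbove S := ⟨‖A‖, by rintro _ ⟨x, hx, rfl⟩; exact hPbd x hx.le⟩
      set M : ℝ := sSup S with hMdef
      have hMle : ∀ x : X, ‖x‖ < 1 → ‖P x‖ ≤ M := fun x hx => le_csSup hSbdd ⟨x, hx, rfl⟩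
      have hM0 : 0 ≤ M := le_trans (norm_nonneg _) (hMle 0 (by simp))
      have hM1 : ∀ x : X, ‖x‖ ≤ 1 → ‖P x‖ ≤ M := by
        intro x hx
        have hev : ∀ᶠ ρ in 𝓝[<] (1:ℝ), ρ ^ N * ‖P x‖ ≤ M := by
          filter_upwards [Ioo_mem_nhdsLT_of_mem (by norm_num : (1:ℝ) ∈ Set.Ioc (0:ℝ) 1)]
            with ρ hρ
          have h1 : ‖(ρ:ℂ) • x‖ < 1 := by
            rw [norm_smul, Complex.norm_real, Real.norm_eq_abs, abs_of_pos hρ.1]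
            calc ρ * ‖x‖ ≤ ρ * 1 := mul_le_mul_of_nonneg_left hx hρ.1.le
              _ < 1 := by linarith [hρ.2]
          have h2 := hMle _ h1
          rwa [hnorm, Complex.norm_real, Real.norm_eq_abs, abs_of_pos hρ.1] at h2
        have hten : Tendsto (fun ρ : ℝ => ρ ^ N * ‖P x‖) (𝓝[<] (1:ℝ)) (𝓝 ((1:ℝ) ^ N * ‖P x‖)) :=
          (((continuous_pow N).mul continuous_const).tendsto 1).mono_left nhdsWithin_le_nhds
        have := le_of_tendsto hten hev
        simpa using this
      have hxN : ∀ x : X, ‖x‖ < 1 → ‖P x‖ ≤ ‖x‖ ^ N * M := by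
        intro x hx
        rcases eq_or_ne x 0 with rfl | hx0
        · simp [hP0, zero_pow hNne]
        · have hnx : 0 < ‖x‖ := norm_pos_iff.mpr hx0
          have hcne : ((‖x‖ : ℂ)) ≠ 0 := by
            simpa using hnx.ne'
          set u : X := ((‖x‖ : ℂ))⁻¹ • x with hu
          have hxu : x = ((‖x‖ : ℂ)) • u := by
            rw [hu, smul_inv_smul₀ hcne]
          have hunorm : ‖u‖ = 1 := by
            rw [hu, norm_smul, norm_inv, Complex.norm_real, Real.norm_eq_abs,
              abs_of_pos hnx, inv_mul_cancel₀ hnx.ne']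
          calc ‖P x‖ = ‖(‖x‖:ℂ)‖ ^ N * ‖P u‖ := by
                conv_lhs => rw [hxu]
                rw [hnorm]
            _ = ‖x‖ ^ N * ‖P u‖ := by
                rw [Complex.norm_real, Real.norm_eq_abs, abs_of_pos hnx]
            _ ≤ ‖x‖ ^ N * M :=
                mul_le_mul_of_nonneg_left (hM1 u hunorm.le) (by positivity)
      set V : Set ℝ := (fun x => (1 - ‖x‖ ^ 2) * ‖P x‖) '' {x : X | ‖x‖ < 1} with hVdef
      have hVne : V.Nonempty := ⟨_, 0, by simp, rfl⟩
      have hVbdd : BddAbove V := by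
        refine ⟨‖A‖, ?_⟩
        rintro _ ⟨x, hx, rfl⟩
        simp only [Set.mem_setOf_eq] at hx
        simp only []
        have h1 := hPbd x (le_of_lt hx)
        have h2 : (0:ℝ) ≤ ‖x‖ ^ 2 := sq_nonneg _
        nlinarith [norm_nonneg (P x), norm_nonneg A, mul_nonneg h2 (norm_nonneg (P x))]
      -- upper bound
      have hupper : sSup V ≤ δ * M := by
        apply csSup_le hVne
        rintro _ ⟨x, hx, rfl⟩
        simp only [Set.mem_setOf_eq] at hx
        have h1 : ‖P x‖ ≤ ‖x‖ ^ N * M := hxN x hx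
        have hx2le : ‖x‖ ^ 2 ≤ 1 := by nlinarith [norm_nonneg x]
        have key : (1 - ‖x‖ ^ 2) * (‖x‖ ^ 2) ^ ((N:ℝ)/2) ≤ (1 - a) * a ^ ((N:ℝ)/2) :=
          aux_amgm N hN (sq_nonneg _) hx2le
        have hpow : (‖x‖ ^ 2) ^ ((N:ℝ)/2) = ‖x‖ ^ N := by
          rw [← Real.rpow_natCast ‖x‖ 2, ← Real.rpow_mul (norm_nonneg x),
            show ((2:ℕ):ℝ) * ((N:ℝ)/2) = ((N:ℕ):ℝ) by push_cast; ring, Real.rpow_natCast]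
        rw [hpow] at key
        have h2 : (1 - ‖x‖ ^ 2) * ‖x‖ ^ N ≤ δ := by rw [hδeq]; linarith
        have h3 : (0:ℝ) ≤ 1 - ‖x‖ ^ 2 := by linarith
        calc (1 - ‖x‖ ^ 2) * ‖P x‖ ≤ (1 - ‖x‖ ^ 2) * (‖x‖ ^ N * M) :=
              mul_le_mul_of_nonneg_left h1 h3
          _ = ((1 - ‖x‖ ^ 2) * ‖x‖ ^ N) * M := by ring
          _ ≤ δ * M := mul_le_mul_of_nonneg_right h2 hM0
      -- lower bound
      have hlower : δ * M ≤ sSup V := by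
        have hstep : ∀ x : X, ‖x‖ < 1 → δ * ‖P x‖ ≤ sSup V := by
          intro x hx
          have hynorm : ‖(t:ℂ) • x‖ = t * ‖x‖ := by
            rw [norm_smul, Complex.norm_real, Real.norm_eq_abs, abs_of_pos ht0]
          have hy : ‖(t:ℂ) • x‖ < 1 := by
            rw [hynorm]
            nlinarith [norm_nonneg x]
          have hle := le_csSup hVbdd (⟨(t:ℂ) • x, hy, rfl⟩ : (1 - ‖(t:ℂ) • x‖ ^ 2) * ‖P ((t:ℂ) • x)‖ ∈ V)
          have hcomp : δ * ‖P x‖ ≤ (1 - ‖(t:ℂ) • x‖ ^ 2) * ‖P ((t:ℂ) • x)‖ := by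
            rw [hynorm, hnorm, Complex.norm_real, Real.norm_eq_abs, abs_of_pos ht0]
            have hδt : δ = (1 - t ^ 2) * t ^ N := by rw [hδeq, ← htN, ht2]; ring
            have h1 : (t * ‖x‖) ^ 2 ≤ t ^ 2 := by
              have hx2 : ‖x‖ ^ 2 ≤ 1 := by nlinarith [norm_nonneg x]
              calc (t * ‖x‖) ^ 2 = t ^ 2 * ‖x‖ ^ 2 := by ring
                _ ≤ t ^ 2 * 1 := mul_le_mul_of_nonneg_left hx2 (sq_nonneg t)
                _ = t ^ 2 := mul_one _
            have h2 : (0:ℝ) ≤ t ^ N * ‖P x‖ := by positivity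
            rw [hδt, mul_assoc]
            exact mul_le_mul_of_nonneg_right (by linarith) h2
          linarith
        have hMd : M ≤ sSup V / δ := by
          apply csSup_le hSne
          rintro _ ⟨x, hx, rfl⟩
          rw [le_div_iff₀ hδpos, mul_comm]
          exact hstep x hx
        calc δ * M ≤ δ * (sSup V / δ) := mul_le_mul_of_nonneg_left hMd hδpos.le
          _ = sSup V := by field_simp
      -- sNorm
      have hsNpos : (0:ℝ) < s ^ N := by positivity
      have hsnorm : sNorm s P = s ^ N * M := by
        set T : Set ℝ := (fun x => ‖P ((s:ℂ) • x)‖) '' {x : X | ‖x‖ < 1} with hTdef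
        have hTne : T.Nonempty := ⟨_, 0, by simp, rfl⟩
        have hselt : ∀ x : X, ‖x‖ < 1 → ‖P ((s:ℂ) • x)‖ = s ^ N * ‖P x‖ := by
          intro x hx
          rw [hnorm, Complex.norm_real, Real.norm_eq_abs, abs_of_pos hs0]
        have hTbdd : BddAbove T := by
          refine ⟨‖A‖, ?_⟩
          rintro _ ⟨x, hx, rfl⟩
          simp only [Set.mem_setOf_eq] at hx
          apply hPbd
          rw [norm_smul, Complex.norm_real, Real.norm_eq_abs, abs_of_pos hs0]
          calc s * ‖x‖ ≤ 1 * 1 :=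
                mul_le_mul hs1 hx.le (norm_nonneg x) zero_le_one
            _ = 1 := one_mul _
        apply le_antisymm
        · apply csSup_le hTne
          rintro _ ⟨x, hx, rfl⟩
          simp only [Set.mem_setOf_eq] at hx
          show ‖P ((s:ℂ) • x)‖ ≤ s ^ N * M
          rw [hselt x hx]
          exact mul_le_mul_of_nonneg_left (hMle x hx) hsNpos.le
        · have hMd : M ≤ sSup T / s ^ N := by
            apply csSup_le hSne
            rintro _ ⟨x, hx, rfl⟩
            simp only [Set.mem_setOf_eq] at hx
            show ‖P x‖ ≤ sSup T / s ^ N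
            rw [le_div_iff₀ hsNpos, mul_comm]
            refine le_csSup hTbdd ⟨x, hx, ?_⟩
            exact hselt x hx
          calc s ^ N * M ≤ s ^ N * (sSup T / s ^ N) :=
                mul_le_mul_of_nonneg_left hMd hsNpos.le
            _ = sSup T := by field_simp
      have hvnorm : vNorm P = δ * M := le_antisymm hupper hlower
      rw [hvnorm, hsnorm]
      have hsNne : (s:ℝ) ^ N ≠ 0 := ne_of_gt hsNpos
      field_simp
end

section
/- Let X and Y be complex Banach spaces, N ≥ 1, and P : X → Y a continuous N-homogeneous polynomial. The following are equivalent: (a) P attains its v-norm; (b) P attains its s-norm for some s ∈ (0,1]; (c) P attains its s-norm for every s ∈ (0,1]. -/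
open Filter Topology Metric

section aux

variable {X Y : Type*} [NormedAddCommGroup X] [NormedSpace ℂ X]
    [NormedAddCommGroup Y] [NormedSpace ℂ Y]

lemma sSup_image_mul (c : ℝ) (hc : 0 ≤ c) (S : Set ℝ) :
    sSup ((fun r => c * r) '' S) = c * sSup S := by
  have := Real.sSup_smul_of_nonneg hc S
  simpa [← Set.image_smul, smul_eq_mul] using this

lemma sNorm_one_eq' (P : X → Y) :
    sNorm 1 P = sSup ((fun x => ‖P x‖) '' {x : X | ‖x‖ < 1}) := by
  unfold sNorm
  norm_num

variable (N : ℕ) (P : X → Y)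
  (A : ContinuousMultilinearMap ℂ (fun _ : Fin N => X) Y)

lemma hom_smul (hA : ∀ x, P x = A (fun _ => x)) (c : ℂ) (x : X) :
    P (c • x) = c ^ N • P x := by
  rw [hA, hA]
  have := A.map_smul_univ (fun _ : Fin N => c) (fun _ => x)
  simpa using this

lemma norm_smul_real' (t : ℝ) (ht : 0 ≤ t) (x : X) (hA : ∀ x, P x = A (fun _ => x)) :
    ‖P ((t : ℂ) • x)‖ = t ^ N * ‖P x‖ := by
  rw [hom_smul N P A hA, norm_smul]
  simp [abs_of_nonneg ht]

lemma P_zero' (hN : 1 ≤ N) (hA : ∀ x, P x = A (fun _ => x)) : P 0 = 0 := by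
  have := hom_smul N P A hA 0 0
  simpa [zero_pow (by omega : N ≠ 0)] using this

lemma P_bound' (x : X) (hx : ‖x‖ ≤ 1) (hA : ∀ x, P x = A (fun _ => x)) : ‖P x‖ ≤ ‖A‖ := by
  rw [hA]
  calc ‖A fun _ => x‖ ≤ ‖A‖ * ∏ _i : Fin N, ‖x‖ := A.le_opNorm _
    _ ≤ ‖A‖ * 1 := by
        refine mul_le_mul_of_nonneg_left ?_ (norm_nonneg A)
        simp only [Finset.prod_const, Finset.card_univ, Fintype.card_fin]
        exact pow_le_one₀ (norm_nonneg x) hx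
    _ = ‖A‖ := mul_one _

lemma S1_bdd (hA : ∀ x, P x = A (fun _ => x)) :
    BddAbove ((fun x => ‖P x‖) '' {x : X | ‖x‖ < 1}) := by
  refine ⟨‖A‖, ?_⟩
  rintro v ⟨x, hx, rfl⟩
  exact P_bound' N P A x hx.le hA

lemma le_M (x : X) (hx : ‖x‖ < 1) (hA : ∀ x, P x = A (fun _ => x)) : ‖P x‖ ≤ sNorm 1 P := by
  rw [sNorm_one_eq' P]
  exact le_csSup (S1_bdd N P A hA) ⟨x, hx, rfl⟩

lemma M_nonneg' (hA : ∀ x, P x = A (fun _ => x)) : 0 ≤ sNorm 1 P :=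
  (norm_nonneg (P 0)).trans (le_M N P A 0 (by simp) hA)

lemma le_M'' (x : X) (hx : ‖x‖ ≤ 1) (hA : ∀ x, P x = A (fun _ => x)) : ‖P x‖ ≤ sNorm 1 P := by
  have key : ∀ t : ℝ, t ∈ Set.Ioo (0:ℝ) 1 → t ^ N * ‖P x‖ ≤ sNorm 1 P := by
    intro t ht
    rw [← norm_smul_real' N P A t ht.1.le x hA]
    refine le_M N P A _ ?_ hA
    rw [norm_smul]
    calc ‖(t:ℂ)‖ * ‖x‖ ≤ t * 1 := by
          refine mul_le_mul (by simp [abs_of_nonneg ht.1.le]) hx (norm_nonneg _) ht.1.le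
      _ < 1 := by linarith [ht.2]
  have htend : Filter.Tendsto (fun t : ℝ => t ^ N * ‖P x‖) (nhdsWithin 1 (Set.Iio 1))
      (nhds (1 ^ N * ‖P x‖)) :=
    (((continuous_pow N).mul continuous_const).tendsto 1).mono_left nhdsWithin_le_nhds
  have : (1:ℝ) ^ N * ‖P x‖ ≤ sNorm 1 P := by
    refine le_of_tendsto htend ?_
    filter_upwards [Ioo_mem_nhdsLT_of_mem (by norm_num : (1:ℝ) ∈ Set.Ioc (0:ℝ) 1)] with t ht
    exact key t ht
  simpa using this

lemma sNorm_eq (s : ℝ) (hs : 0 ≤ s) (hA : ∀ x, P x = A (fun _ => x)) :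
    sNorm s P = s ^ N * sNorm 1 P := by
  conv_rhs => rw [sNorm_one_eq' P]
  unfold sNorm
  have h : (fun x : X => ‖P ((s:ℂ) • x)‖) = (fun r => s ^ N * r) ∘ (fun x => ‖P x‖) := by
    funext x
    exact norm_smul_real' N P A s hs x hA
  rw [h, Set.image_comp, sSup_image_mul _ (by positivity)]

lemma attainsS_iff (hA : ∀ x, P x = A (fun _ => x)) (s : ℝ) (hs : 0 < s) (hs1 : s ≤ 1) :
    AttainsS s P ↔ AttainsS 1 P := by
  constructor
  · rintro ⟨x₀, h1, h2⟩
    refine ⟨((s⁻¹ : ℝ) : ℂ) • x₀, ?_, ?_⟩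
    · rw [norm_smul]
      simp only [Complex.norm_real, Real.norm_eq_abs, abs_of_nonneg (inv_nonneg.mpr hs.le)]
      rw [inv_mul_le_iff₀ hs]
      simpa using h1
    · rw [norm_smul_real' N P A _ (inv_nonneg.mpr hs.le) _ hA, h2,
        sNorm_eq N P A s hs.le hA, ← mul_assoc, ← mul_pow, inv_mul_cancel₀ hs.ne',
        one_pow, one_mul]
  · rintro ⟨y₀, h1, h2⟩
    refine ⟨(s : ℂ) • y₀, ?_, ?_⟩
    · rw [norm_smul]
      simp only [Complex.norm_real, Real.norm_eq_abs, abs_of_nonneg hs.le]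
      calc s * ‖y₀‖ ≤ s * 1 := mul_le_mul_of_nonneg_left h1 hs.le
        _ = s := mul_one s
    · rw [norm_smul_real' N P A s hs.le y₀ hA, h2, sNorm_eq N P A s hs.le hA]

lemma attainsV_iff (hA : ∀ x, P x = A (fun _ => x)) (hN : 1 ≤ N) : AttainsV P ↔ AttainsS 1 P := by
  set M := sNorm 1 P with hMdef
  have hM0 : 0 ≤ M := M_nonneg' N P A hA
  set g : ℝ → ℝ := fun r => (1 - r ^ 2) * r ^ N with hgdef
  obtain ⟨r₀, hr₀mem, hmax⟩ := isCompact_Icc.exists_isMaxOn (Set.nonempty_Icc.mpr zero_le_one)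
    (Continuous.continuousOn (by fun_prop) : ContinuousOn g (Set.Icc 0 1))
  have hmax' : ∀ r ∈ Set.Icc (0:ℝ) 1, g r ≤ g r₀ := fun r hr => hmax hr
  have hgpos : 0 < g r₀ := by
    refine lt_of_lt_of_le ?_ (hmax' (1/2) (by norm_num))
    show (0:ℝ) < (1 - (1/2:ℝ) ^ 2) * (1/2:ℝ) ^ N
    positivity
  have hr₀0 : 0 < r₀ := by
    rcases hr₀mem.1.lt_or_eq with h | h
    · exact h
    · exfalso; rw [← h] at hgpos
      simp [hgdef, zero_pow (by omega : N ≠ 0)] at hgpos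
  have hr₀1 : r₀ < 1 := by
    rcases hr₀mem.2.lt_or_eq with h | h
    · exact h
    · exfalso; rw [h] at hgpos; simp [hgdef] at hgpos
  -- vNorm basic facts
  have hVbdd : BddAbove ((fun x : X => (1 - ‖x‖ ^ 2) * ‖P x‖) '' {x : X | ‖x‖ < 1}) := by
    refine ⟨‖A‖, ?_⟩
    rintro v ⟨x, hx, rfl⟩
    simp only [Set.mem_setOf_eq] at hx
    have h1 : 0 ≤ 1 - ‖x‖ ^ 2 := by nlinarith [norm_nonneg x, hx.le]
    calc (1 - ‖x‖ ^ 2) * ‖P x‖ ≤ 1 * ‖P x‖ := by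
          refine mul_le_mul_of_nonneg_right ?_ (norm_nonneg _); nlinarith [norm_nonneg x]
      _ = ‖P x‖ := one_mul _
      _ ≤ ‖A‖ := P_bound' N P A x hx.le hA
  have hVle : ∀ x : X, ‖x‖ < 1 → (1 - ‖x‖ ^ 2) * ‖P x‖ ≤ vNorm P := fun x hx =>
    le_csSup hVbdd ⟨x, hx, rfl⟩
  have hV0 : 0 ≤ vNorm P := by
    have := hVle 0 (by simp)
    simpa [P_zero' N P A hN hA] using this
  -- unit rescale
  have hunit : ∀ x : X, x ≠ 0 → ‖P x‖ = ‖x‖ ^ N * ‖P (((‖x‖⁻¹ : ℝ) : ℂ) • x)‖ := by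
    intro x hx0
    have hx : (0:ℝ) < ‖x‖ := norm_pos_iff.mpr hx0
    have : ((‖x‖ : ℝ) : ℂ) • (((‖x‖⁻¹ : ℝ) : ℂ) • x) = x := by
      rw [smul_smul]
      rw [show ((‖x‖:ℝ):ℂ) * ((‖x‖⁻¹:ℝ):ℂ) = 1 by norm_cast; exact mul_inv_cancel₀ hx.ne']
      simp
    conv_lhs => rw [← this]
    exact norm_smul_real' N P A ‖x‖ hx.le _ hA
  have hunorm : ∀ x : X, x ≠ 0 → ‖(((‖x‖⁻¹ : ℝ) : ℂ) • x)‖ = 1 := by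
    intro x hx0
    have hx : (0:ℝ) < ‖x‖ := norm_pos_iff.mpr hx0
    rw [norm_smul]
    simp [abs_of_nonneg (inv_nonneg.mpr hx.le), inv_mul_cancel₀ hx.ne']
  -- vNorm = g r₀ * M
  have hVeq : vNorm P = g r₀ * M := by
    refine le_antisymm ?_ ?_
    · refine csSup_le ⟨(1 - ‖(0:X)‖ ^ 2) * ‖P 0‖, ⟨0, by simp, rfl⟩⟩ ?_
      rintro v ⟨x, hx, rfl⟩
      simp only [Set.mem_setOf_eq] at hx
      by_cases hx0 : x = 0
      · subst hx0
        have h0 : (1 - ‖(0:X)‖ ^ 2) * ‖P (0:X)‖ = 0 := by simp [P_zero' N P A hN hA]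
        show (1 - ‖(0:X)‖ ^ 2) * ‖P (0:X)‖ ≤ g r₀ * M
        rw [h0]; exact mul_nonneg hgpos.le hM0
      · have hxpos : (0:ℝ) < ‖x‖ := norm_pos_iff.mpr hx0
        have h1 : 0 ≤ 1 - ‖x‖ ^ 2 := by nlinarith
        have hPu : ‖P (((‖x‖⁻¹ : ℝ) : ℂ) • x)‖ ≤ M :=
          le_M'' N P A _ (hunorm x hx0).le hA
        calc (1 - ‖x‖ ^ 2) * ‖P x‖
            = (1 - ‖x‖ ^ 2) * (‖x‖ ^ N * ‖P (((‖x‖⁻¹ : ℝ) : ℂ) • x)‖) := by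
              rw [hunit x hx0]
          _ ≤ (1 - ‖x‖ ^ 2) * (‖x‖ ^ N * M) := by
              refine mul_le_mul_of_nonneg_left ?_ h1
              exact mul_le_mul_of_nonneg_left hPu (by positivity)
          _ = g ‖x‖ * M := by ring
          _ ≤ g r₀ * M := mul_le_mul_of_nonneg_right
              (hmax' ‖x‖ ⟨hxpos.le, hx.le⟩) hM0
    · have key : ∀ x : X, ‖x‖ < 1 → g r₀ * ‖P x‖ ≤ vNorm P := by
        intro x hx
        by_cases hx0 : x = 0
        · subst hx0; simp only [P_zero' N P A hN hA, norm_zero, mul_zero]; exact hV0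
        · have hxpos : (0:ℝ) < ‖x‖ := norm_pos_iff.mpr hx0
          set z := (((r₀ * ‖x‖⁻¹ : ℝ) : ℂ) • x) with hzdef
          have hznorm : ‖z‖ = r₀ := by
            rw [hzdef, norm_smul]
            simp only [Complex.norm_real, Real.norm_eq_abs]
            rw [abs_of_nonneg (by positivity : (0:ℝ) ≤ r₀ * ‖x‖⁻¹)]
            field_simp
          have hPz : ‖P z‖ = (r₀ * ‖x‖⁻¹) ^ N * ‖P x‖ :=
            norm_smul_real' N P A _ (by positivity) x hA
          have hpow : r₀ ^ N ≤ (r₀ * ‖x‖⁻¹) ^ N := by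
            refine pow_le_pow_left₀ hr₀0.le ?_ N
            nlinarith [inv_anti₀ hxpos hx.le]
          calc g r₀ * ‖P x‖ = (1 - r₀ ^ 2) * (r₀ ^ N * ‖P x‖) := by ring
            _ ≤ (1 - r₀ ^ 2) * ((r₀ * ‖x‖⁻¹) ^ N * ‖P x‖) := by
                refine mul_le_mul_of_nonneg_left ?_ (by nlinarith)
                exact mul_le_mul_of_nonneg_right hpow (norm_nonneg _)
            _ = (1 - ‖z‖ ^ 2) * ‖P z‖ := by rw [hznorm, hPz]
            _ ≤ vNorm P := hVle z (by rw [hznorm]; exact hr₀1)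
      rw [hMdef, sNorm_one_eq' (P := P), ← sSup_image_mul _ hgpos.le]
      refine csSup_le (by exact ⟨_, ⟨_, ⟨0, by simp, rfl⟩, rfl⟩⟩) ?_
      rintro v ⟨w, ⟨x, hx, rfl⟩, rfl⟩
      exact key x hx
  constructor
  · rintro ⟨x₀, hx1, hx2⟩
    rcases hM0.lt_or_eq with hM | hM
    · have hpos : 0 < (1 - ‖x₀‖ ^ 2) * ‖P x₀‖ := by
        rw [hx2, hVeq]; exact mul_pos hgpos hM
      have h1 : 0 < 1 - ‖x₀‖ ^ 2 := by
        rcases mul_pos_iff.mp hpos with ⟨h, _⟩ | ⟨_, h⟩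
        · exact h
        · exact absurd h (not_lt.mpr (norm_nonneg _))
      have hP0 : 0 < ‖P x₀‖ := by
        rcases mul_pos_iff.mp hpos with ⟨_, h⟩ | ⟨_, h⟩
        · exact h
        · exact absurd h (not_lt.mpr (norm_nonneg _))
      have hx0 : x₀ ≠ 0 := by
        intro h; rw [h, P_zero' N P A hN hA] at hP0; simp at hP0
      have hxlt : ‖x₀‖ < 1 := by nlinarith [norm_nonneg x₀]
      have hxpos : (0:ℝ) < ‖x₀‖ := norm_pos_iff.mpr hx0
      set u := (((‖x₀‖⁻¹ : ℝ) : ℂ) • x₀) with hudef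
      have hu1 : ‖u‖ = 1 := hunorm x₀ hx0
      have hPuM : ‖P u‖ ≤ M := le_M'' N P A u hu1.le hA
      have heq : g ‖x₀‖ * ‖P u‖ = g r₀ * M := by
        rw [← hVeq, ← hx2, hunit x₀ hx0]; ring
      have hle1 : g r₀ * M ≤ g ‖x₀‖ * M := by
        rw [← heq]
        exact mul_le_mul_of_nonneg_left hPuM (by
          rw [hgdef]; positivity)
      have hle2 : g ‖x₀‖ * M ≤ g r₀ * M :=
        mul_le_mul_of_nonneg_right (hmax' ‖x₀‖ ⟨hxpos.le, hxlt.le⟩) hM0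
      have hgx : 0 < g ‖x₀‖ := by
        rw [hgdef]; show (0:ℝ) < (1 - ‖x₀‖^2) * ‖x₀‖^N; positivity
      have : g ‖x₀‖ * ‖P u‖ = g ‖x₀‖ * M := by
        rw [heq]; linarith
      exact ⟨u, hu1.le, mul_left_cancel₀ hgx.ne' this⟩
    · exact ⟨0, by simp, by
        rw [P_zero' N P A hN hA]; simp [← hMdef, ← hM]⟩
  · rintro ⟨y₀, hy1, hy2⟩
    refine ⟨((r₀ : ℝ) : ℂ) • y₀, ?_, ?_⟩
    · rw [norm_smul]
      simp only [Complex.norm_real, Real.norm_eq_abs, abs_of_nonneg hr₀0.le]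
      nlinarith
    · have hxn : ‖(((r₀:ℝ):ℂ) • y₀)‖ = r₀ * ‖y₀‖ := by
        rw [norm_smul]; simp [abs_of_nonneg hr₀0.le]
      have hxr : ‖(((r₀:ℝ):ℂ) • y₀)‖ ≤ r₀ := by
        rw [hxn]; nlinarith
      have hxlt : ‖(((r₀:ℝ):ℂ) • y₀)‖ < 1 := lt_of_le_of_lt hxr hr₀1
      have hPx : ‖P (((r₀:ℝ):ℂ) • y₀)‖ = r₀ ^ N * M := by
        rw [norm_smul_real' N P A r₀ hr₀0.le y₀ hA, hy2]
      refine le_antisymm (hVle _ hxlt) ?_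
      rw [hVeq, hPx]
      have : (1 - r₀ ^ 2) ≤ 1 - ‖(((r₀:ℝ):ℂ) • y₀)‖ ^ 2 := by nlinarith [hxr, norm_nonneg (((r₀:ℝ):ℂ) • y₀)]
      calc g r₀ * M = (1 - r₀ ^ 2) * (r₀ ^ N * M) := by ring
        _ ≤ (1 - ‖(((r₀:ℝ):ℂ) • y₀)‖ ^ 2) * (r₀ ^ N * M) :=
            mul_le_mul_of_nonneg_right this (by positivity)

end aux

/-- for a continuous `N`-homogeneous polynomial, attaining the `v`-norm,
attaining the `s`-norm for some `s ∈ (0,1]`, and attaining it for all `s ∈ (0,1]`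
are equivalent. -/
theorem stmt4 {X Y : Type*} [NormedAddCommGroup X] [NormedSpace ℂ X] [CompleteSpace X]
    [NormedAddCommGroup Y] [NormedSpace ℂ Y] [CompleteSpace Y]
    (N : ℕ) (hN : 1 ≤ N) (P : X → Y) (hP : IsHomPoly N P) :
    (AttainsV P ↔ ∃ s : ℝ, 0 < s ∧ s ≤ 1 ∧ AttainsS s P) ∧
    ((∃ s : ℝ, 0 < s ∧ s ≤ 1 ∧ AttainsS s P) ↔ ∀ s : ℝ, 0 < s → s ≤ 1 → AttainsS s P) := by
  obtain ⟨A, hA⟩ := hP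
  have hv : AttainsV P ↔ AttainsS 1 P := attainsV_iff N P A hA hN
  have hs : ∀ s : ℝ, 0 < s → s ≤ 1 → (AttainsS s P ↔ AttainsS 1 P) :=
    fun s h1 h2 => attainsS_iff N P A hA s h1 h2
  constructor
  · constructor
    · intro h
      exact ⟨1, one_pos, le_refl 1, hv.mp h⟩
    · rintro ⟨s, h1, h2, h⟩
      exact hv.mpr ((hs s h1 h2).mp h)
  · constructor
    · rintro ⟨s, h1, h2, h⟩ t ht ht1
      exact (hs t ht ht1).mpr ((hs s h1 h2).mp h)
    · intro h
      exact ⟨1, one_pos, le_refl 1, h 1 one_pos (le_refl 1)⟩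
end

section
/- Let X and Y be complex Banach spaces and N ≥ 1. Then for every s ∈ (0,1) and every polynomial P : X → Y of degree at most N one has ‖P‖_s ≥ (1 − Σ_{n=1}^N (1 − s^n) · n^n/n!) · ‖P‖_∞. -/
open Filter Topology Metric

open Finset

lemma rootsum (M : ℕ) (ζ : ℂ) (hζ : IsPrimitiveRoot ζ M) (d : ℕ) :
    ∑ j ∈ Finset.range M, (ζ ^ d) ^ j = if M ∣ d then (M : ℂ) else 0 := by
  by_cases h : M ∣ d
  · obtain ⟨e, rfl⟩ := h
    simp [pow_mul, hζ.pow_eq_one, one_pow]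
  · rw [if_neg h]
    have hz1 : ζ ^ d ≠ 1 := fun hcontra => h ((hζ.pow_eq_one_iff_dvd d).mp hcontra)
    rw [geom_sum_eq hz1]
    have : (ζ ^ d) ^ M = 1 := by
      rw [← pow_mul, mul_comm, pow_mul, hζ.pow_eq_one, one_pow]
    rw [this, sub_self, zero_div]

lemma coeff_norm_le {Y : Type*} [NormedAddCommGroup Y] [NormedSpace ℂ Y]
    (N : ℕ) (c : ℕ → Y) (B : ℝ)
    (hf : ∀ z : ℂ, ‖z‖ = 1 → ‖∑ m ∈ Finset.range (N+1), z ^ m • c m‖ ≤ B)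
    (k : ℕ) (hk : k ≤ N) : ‖c k‖ ≤ B := by
  have hM : N + 1 ≠ 0 := Nat.succ_ne_zero N
  obtain ⟨ζ, hζ⟩ : ∃ ζ : ℂ, IsPrimitiveRoot ζ (N + 1) :=
    ⟨_, Complex.isPrimitiveRoot_exp (N + 1) hM⟩
  have hnorm : ‖ζ‖ = 1 := Complex.norm_eq_one_of_pow_eq_one hζ.pow_eq_one hM
  have hkM : k < N + 1 := Nat.lt_succ_of_le hk
  have key : ∑ j ∈ Finset.range (N + 1),
        (ζ ^ ((N + 1 - k) * j)) • (∑ m ∈ Finset.range (N + 1), (ζ ^ j) ^ m • c m)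
      = (((N + 1 : ℕ)) : ℂ) • c k := by
    have h1 : ∀ j ∈ Finset.range (N + 1),
        (ζ ^ ((N + 1 - k) * j)) • (∑ m ∈ Finset.range (N + 1), (ζ ^ j) ^ m • c m)
        = ∑ m ∈ Finset.range (N + 1), (ζ ^ (N + 1 - k + m)) ^ j • c m := by
      intro j _
      rw [Finset.smul_sum]
      refine Finset.sum_congr rfl fun m _ => ?_
      rw [smul_smul]
      congr 1
      rw [← pow_mul, ← pow_mul, ← pow_add]
      congr 1
      ring
    rw [Finset.sum_congr rfl h1, Finset.sum_comm]
    have h2 : ∀ m ∈ Finset.range (N + 1),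
        ∑ j ∈ Finset.range (N + 1), (ζ ^ (N + 1 - k + m)) ^ j • c m
        = if m = k then (((N + 1 : ℕ)) : ℂ) • c k else 0 := by
      intro m hm
      have hmM : m < N + 1 := Finset.mem_range.mp hm
      rw [← Finset.sum_smul, rootsum (N + 1) ζ hζ (N + 1 - k + m)]
      have hdvd : (N + 1 ∣ N + 1 - k + m) ↔ m = k := by
        constructor
        · rintro ⟨e, he⟩
          have he2 : e < 2 := by
            by_contra hcon
            push_neg at hcon
            have : (N + 1) * 2 ≤ (N + 1) * e := Nat.mul_le_mul_left _ hcon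
            omega
          interval_cases e <;> omega
        · intro h
          exact ⟨1, by omega⟩
      by_cases hmk : m = k
      · rw [if_pos (hdvd.mpr hmk), if_pos hmk, hmk]
      · rw [if_neg (fun h => hmk (hdvd.mp h)), if_neg hmk, zero_smul]
    rw [Finset.sum_congr rfl h2,
      Finset.sum_ite_eq' (Finset.range (N + 1)) k (fun _ => (((N + 1 : ℕ)) : ℂ) • c k),
      if_pos (Finset.mem_range.mpr hkM)]
  have hnormbound : (((N + 1 : ℕ)) : ℝ) * ‖c k‖ ≤ (((N + 1 : ℕ)) : ℝ) * B := by
    have lhs_eq : (((N + 1 : ℕ)) : ℝ) * ‖c k‖ = ‖(((N + 1 : ℕ)) : ℂ) • c k‖ := by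
      rw [norm_smul, Complex.norm_natCast]
    rw [lhs_eq, ← key]
    refine le_trans (norm_sum_le _ _) ?_
    have hterm : ∀ j ∈ Finset.range (N + 1),
        ‖(ζ ^ ((N + 1 - k) * j)) • (∑ m ∈ Finset.range (N + 1), (ζ ^ j) ^ m • c m)‖ ≤ B := by
      intro j _
      rw [norm_smul, norm_pow, hnorm, one_pow, one_mul]
      exact hf (ζ ^ j) (by rw [norm_pow, hnorm, one_pow])
    refine le_trans (Finset.sum_le_sum hterm) ?_
    rw [Finset.sum_const, Finset.card_range, nsmul_eq_mul]
  have hMpos : (0 : ℝ) < (((N + 1 : ℕ)) : ℝ) := by positivity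
  exact le_of_mul_le_mul_left hnormbound hMpos

/-- `‖P‖_s ≥ (1 - ∑_{n=1}^N (1-s^n) n^n/n!) ‖P‖_∞` for every polynomial of
degree at most `N` and every `s ∈ (0,1)`. -/
theorem stmt5 {X Y : Type*} [NormedAddCommGroup X] [NormedSpace ℂ X] [CompleteSpace X]
    [NormedAddCommGroup Y] [NormedSpace ℂ Y] [CompleteSpace Y]
    (N : ℕ) (hN : 1 ≤ N) (s : ℝ) (hs0 : 0 < s) (hs1 : s < 1)
    (P : X → Y) (hP : IsPolyDeg N P) :
    sNorm s P ≥
      (1 - ∑ n ∈ Finset.Icc 1 N, (1 - s ^ n) * ((n : ℝ) ^ n / (Nat.factorial n : ℝ))) *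
        supNorm P := by
  obtain ⟨Pk, hhom, hsum⟩ := hP
  -- homogeneity of the components
  have hhomog : ∀ k, k ≤ N → ∀ (z : ℂ) (x : X), Pk k (z • x) = z ^ k • Pk k x := by
    intro k hk z x
    obtain ⟨A, hA⟩ := hhom k hk
    rw [hA, hA]
    have h := A.map_smul_univ (fun _ : Fin k => z) (fun _ => x)
    simpa using h
  -- expansion of P at scaled points
  have hexp : ∀ (z : ℂ) (x : X), P (z • x) = ∑ k ∈ Finset.range (N+1), z ^ k • Pk k x := by
    intro z x
    rw [hsum]
    exact Finset.sum_congr rfl fun k hk =>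
      hhomog k (Nat.lt_succ_iff.mp (Finset.mem_range.mp hk)) z x
  -- a uniform bound on the closed unit ball
  choose A hA using hhom
  set B0 : ℝ := ∑ k ∈ Finset.range (N+1), (if h : k ≤ N then ‖A k h‖ else 0) with hB0
  have hbound : ∀ x : X, ‖x‖ < 1 → ‖P x‖ ≤ B0 := by
    intro x hx
    rw [hsum]
    refine le_trans (norm_sum_le _ _) (Finset.sum_le_sum fun k hk => ?_)
    have hkN : k ≤ N := Nat.lt_succ_iff.mp (Finset.mem_range.mp hk)
    rw [dif_pos hkN, hA k hkN]
    calc ‖A k hkN (fun _ => x)‖ ≤ ‖A k hkN‖ * ∏ _i : Fin k, ‖x‖ := (A k hkN).le_opNorm _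
      _ ≤ ‖A k hkN‖ * 1 := by
          refine mul_le_mul_of_nonneg_left ?_ (norm_nonneg _)
          calc ∏ _i : Fin k, ‖x‖ = ‖x‖ ^ k := by simp
            _ ≤ 1 := pow_le_one₀ (norm_nonneg x) hx.le
      _ = ‖A k hkN‖ := mul_one _
  have hbdd_sup : BddAbove ((fun x => ‖P x‖) '' {x : X | ‖x‖ < 1}) :=
    ⟨B0, by rintro _ ⟨x, hx, rfl⟩; exact hbound x hx⟩
  have hsmem : ∀ x : X, ‖x‖ < 1 → ‖(s : ℂ) • x‖ < 1 := by
    intro x hx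
    rw [norm_smul, Complex.norm_real, Real.norm_eq_abs, abs_of_pos hs0]
    nlinarith [norm_nonneg x]
  have hbdd_s : BddAbove ((fun x => ‖P ((s : ℂ) • x)‖) '' {x : X | ‖x‖ < 1}) :=
    ⟨B0, by rintro _ ⟨x, hx, rfl⟩; exact hbound _ (hsmem x hx)⟩
  have hsup_nonneg : 0 ≤ supNorm P :=
    Real.sSup_nonneg (by rintro _ ⟨x, hx, rfl⟩; exact norm_nonneg _)
  have hsN_nonneg : 0 ≤ sNorm s P :=
    Real.sSup_nonneg (by rintro _ ⟨x, hx, rfl⟩; exact norm_nonneg _)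
  -- coefficient bound via roots of unity
  have hcoef : ∀ x : X, ‖x‖ < 1 → ∀ k, k ≤ N → ‖Pk k x‖ ≤ supNorm P := by
    intro x hx k hk
    refine coeff_norm_le N (fun m => Pk m x) (supNorm P) ?_ k hk
    intro z hz
    rw [← hexp z x]
    refine le_csSup hbdd_sup ⟨z • x, ?_, rfl⟩
    simp only [Set.mem_setOf_eq]
    rw [norm_smul, hz, one_mul]
    exact hx
  set C : ℝ := ∑ n ∈ Finset.Icc 1 N, (1 - s ^ n) * ((n : ℝ) ^ n / (Nat.factorial n : ℝ))
    with hC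
  have hCnonneg : 0 ≤ C := by
    refine Finset.sum_nonneg fun n hn => mul_nonneg ?_ (by positivity)
    have : s ^ n ≤ 1 := pow_le_one₀ hs0.le hs1.le
    linarith
  -- the key pointwise inequality
  have hCge : ∀ x : X, ‖x‖ < 1 → ‖P x‖ ≤ sNorm s P + C * supNorm P := by
    intro x hx
    have h1 : P x = P ((s : ℂ) • x)
        + ∑ k ∈ Finset.range (N+1), ((1 : ℂ) - (s : ℂ) ^ k) • Pk k x := by
      rw [hexp, hsum x, ← Finset.sum_add_distrib]
      refine Finset.sum_congr rfl fun k _ => ?_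
      have hk1 : (s : ℂ) ^ k + ((1 : ℂ) - (s : ℂ) ^ k) = 1 := by ring
      rw [← add_smul, hk1, one_smul]
    have hterm : ∀ k ∈ Finset.Icc 1 N,
        ‖((1 : ℂ) - (s : ℂ) ^ k) • Pk k x‖
          ≤ (1 - s ^ k) * ((k : ℝ) ^ k / (Nat.factorial k : ℝ)) * supNorm P := by
      intro k hk
      obtain ⟨hk1, hkN⟩ := Finset.mem_Icc.mp hk
      have hsk : s ^ k ≤ 1 := pow_le_one₀ hs0.le hs1.le
      have hnorm1 : ‖(1 : ℂ) - (s : ℂ) ^ k‖ = 1 - s ^ k := by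
        rw [show (1 : ℂ) - (s : ℂ) ^ k = ((1 - s ^ k : ℝ) : ℂ) by push_cast; ring,
          Complex.norm_real, Real.norm_eq_abs, abs_of_nonneg (by linarith)]
      rw [norm_smul, hnorm1]
      have hfac : (1 : ℝ) ≤ (k : ℝ) ^ k / (Nat.factorial k : ℝ) := by
        rw [le_div_iff₀ (by positivity), one_mul]
        exact_mod_cast Nat.factorial_le_pow k
      calc (1 - s ^ k) * ‖Pk k x‖ ≤ (1 - s ^ k) * supNorm P :=
            mul_le_mul_of_nonneg_left (hcoef x hx k hkN) (by linarith)
        _ = (1 - s ^ k) * 1 * supNorm P := by ring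
        _ ≤ (1 - s ^ k) * ((k : ℝ) ^ k / (Nat.factorial k : ℝ)) * supNorm P := by
            refine mul_le_mul_of_nonneg_right ?_ hsup_nonneg
            exact mul_le_mul_of_nonneg_left hfac (by linarith)
    have hsplit : ∑ k ∈ Finset.range (N+1), ‖((1 : ℂ) - (s : ℂ) ^ k) • Pk k x‖
        = ∑ k ∈ Finset.Icc 1 N, ‖((1 : ℂ) - (s : ℂ) ^ k) • Pk k x‖ := by
      rw [Finset.range_eq_Ico,
        ← Finset.sum_Ico_consecutive _ (Nat.zero_le 1) (by omega : 1 ≤ N + 1),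
        ← Finset.Ico_add_one_right_eq_Icc]
      simp
    calc ‖P x‖ ≤ ‖P ((s : ℂ) • x)‖
          + ∑ k ∈ Finset.range (N+1), ‖((1 : ℂ) - (s : ℂ) ^ k) • Pk k x‖ := by
          rw [h1]; exact le_trans (norm_add_le _ _) (by gcongr; exact norm_sum_le _ _)
      _ ≤ sNorm s P + C * supNorm P := by
          refine add_le_add (le_csSup hbdd_s ⟨x, hx, rfl⟩) ?_
          rw [hsplit, hC, Finset.sum_mul]
          exact Finset.sum_le_sum hterm
  have hfinal : supNorm P ≤ sNorm s P + C * supNorm P := by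
    refine Real.sSup_le ?_ ?_
    · rintro _ ⟨x, hx, rfl⟩; exact hCge x hx
    · exact add_nonneg hsN_nonneg (mul_nonneg hCnonneg hsup_nonneg)
  have : (1 - C) * supNorm P ≤ sNorm s P := by nlinarith
  exact this
end

section
/- For every natural number N ≥ 1 there exists s(N) ∈ (0,1) such that for all complex Banach spaces X and Y and every polynomial P : X → Y of degree at most N one has ‖P‖_v = sup_{s ∈ [0, s(N)]} (1 − s²) ‖P‖_s. -/
open Filter Topology Metric

section aux
set_option linter.unusedSectionVars false
variable {X Y : Type*} [NormedAddCommGroup X] [NormedSpace ℂ X]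
  [NormedAddCommGroup Y] [NormedSpace ℂ Y]

lemma homPoly_smul {k : ℕ} {Q : X → Y} (h : IsHomPoly k Q) (c : ℂ) (x : X) :
    Q (c • x) = c ^ k • Q x := by
  obtain ⟨A, hA⟩ := h
  rw [hA, hA]
  have h2 := A.map_smul_univ (fun _ : Fin k => c) (fun _ => x)
  simpa using h2

lemma sum_root (n : ℕ) (hn : n ≠ 0) (d : ℕ) :
    ∑ j ∈ Finset.range n, Complex.exp (2 * Real.pi * Complex.I / n) ^ (j * d) =
      if n ∣ d then (n : ℂ) else 0 := by
  have hprim : IsPrimitiveRoot (Complex.exp (2 * Real.pi * Complex.I / n)) n :=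
    Complex.isPrimitiveRoot_exp n hn
  set ω := Complex.exp (2 * Real.pi * Complex.I / n) with hω
  have h1 : ∀ j, ω ^ (j * d) = (ω ^ d) ^ j := fun j => by
    rw [← pow_mul, Nat.mul_comm]
  simp only [h1]
  by_cases hd : n ∣ d
  · have : ω ^ d = 1 := (hprim.pow_eq_one_iff_dvd d).mpr hd
    simp [this, hd]
  · have hne : ω ^ d ≠ 1 := fun h => hd ((hprim.pow_eq_one_iff_dvd d).mp h)
    rw [geom_sum_eq hne]
    have h2 : (ω ^ d) ^ n = 1 := by
      rw [← pow_mul, Nat.mul_comm, pow_mul, hprim.pow_eq_one, one_pow]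
    rw [h2]
    simp [hd]

lemma norm_root (n : ℕ) : ‖Complex.exp (2 * Real.pi * Complex.I / n)‖ = 1 := by
  have h : (2 * (Real.pi : ℂ) * Complex.I / n) = ((2 * Real.pi / n : ℝ) : ℂ) * Complex.I := by
    push_cast; ring
  rw [h, Complex.norm_exp_ofReal_mul_I]

lemma coeff_bound {N : ℕ} {P : X → Y} {Pk : ℕ → X → Y}
    (hPk : ∀ k, k ≤ N → IsHomPoly k (Pk k))
    (hP : ∀ x, P x = ∑ k ∈ Finset.range (N + 1), Pk k x)
    {s : ℝ} (hs : 0 < s) {M : ℝ}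
    (hM : ∀ u : X, ‖u‖ < 1 → ‖P ((s : ℂ) • u)‖ ≤ M)
    {x : X} (hx : ‖x‖ < 1) {k : ℕ} (hk : k ≤ N) :
    s ^ k * ‖Pk k x‖ ≤ M := by
  set n := N + 1 with hn
  set ω := Complex.exp (2 * Real.pi * Complex.I / n) with hω
  have hωn : ‖ω‖ = 1 := norm_root n
  have hkn : k < n := Nat.lt_succ_of_le hk
  have hT : ∑ j ∈ Finset.range n, (ω ^ (j * (n - k))) • P (((s : ℂ) * ω ^ j) • x)
      = ((n : ℂ) * (s : ℂ) ^ k) • Pk k x := by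
    have expand : ∀ j, (ω ^ (j * (n - k))) • P (((s : ℂ) * ω ^ j) • x)
        = ∑ m ∈ Finset.range n, ((s : ℂ) ^ m * ω ^ (j * (n - k + m))) • Pk m x := by
      intro j
      rw [hP, Finset.smul_sum]
      refine Finset.sum_congr rfl fun m hm => ?_
      rw [homPoly_smul (hPk m (Nat.lt_succ_iff.mp (Finset.mem_range.mp hm))) _ x, smul_smul]
      congr 1
      rw [mul_pow, ← pow_mul, Nat.mul_add, pow_add]
      ring
    simp only [expand]
    rw [Finset.sum_comm]
    have inner : ∀ m ∈ Finset.range n,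
        ∑ j ∈ Finset.range n, ((s : ℂ) ^ m * ω ^ (j * (n - k + m))) • Pk m x
          = (if m = k then (n : ℂ) * (s : ℂ) ^ k else 0) • Pk m x := by
      intro m hm
      rw [← Finset.sum_smul, ← Finset.mul_sum, hω, sum_root n (Nat.succ_ne_zero N)]
      have hdvd : n ∣ (n - k + m) ↔ m = k := by
        constructor
        · rintro ⟨c, hc⟩
          have hm' := Finset.mem_range.mp hm
          have hlow : 1 ≤ n - k + m := by omega
          have hhigh : n - k + m < n * 2 := by omega
          rw [hc] at hlow hhigh
          have hc2 : c < 2 := Nat.lt_of_mul_lt_mul_left hhigh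
          have hc0 : c ≠ 0 := by rintro rfl; simp at hlow
          have hc1 : c = 1 := by omega
          subst hc1
          omega
        · rintro rfl
          exact ⟨1, by omega⟩
      by_cases hmk : m = k
      · subst hmk
        rw [if_pos (hdvd.mpr rfl), if_pos rfl]
        ring_nf
      · rw [if_neg (fun h => hmk (hdvd.mp h)), if_neg hmk, mul_zero]
    rw [Finset.sum_congr rfl inner]
    simp only [ite_smul, zero_smul]
    rw [Finset.sum_ite_eq' (Finset.range n) k
      (fun m => ((n : ℂ) * (s : ℂ) ^ k) • Pk m x)]
    simp [Finset.mem_range.mpr hkn]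
  have hnorm1 : ‖((n : ℂ) * (s : ℂ) ^ k) • Pk k x‖ = n * s ^ k * ‖Pk k x‖ := by
    rw [norm_smul]
    congr 1
    rw [norm_mul, norm_pow]
    simp [Complex.norm_real, abs_of_pos hs, Complex.norm_natCast]
  have hnorm2 : ‖∑ j ∈ Finset.range n, (ω ^ (j * (n - k))) • P (((s : ℂ) * ω ^ j) • x)‖
      ≤ n * M := by
    calc ‖∑ j ∈ Finset.range n, (ω ^ (j * (n - k))) • P (((s : ℂ) * ω ^ j) • x)‖
        ≤ ∑ j ∈ Finset.range n, ‖(ω ^ (j * (n - k))) • P (((s : ℂ) * ω ^ j) • x)‖ :=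
          norm_sum_le _ _
      _ ≤ ∑ _j ∈ Finset.range n, M := by
          refine Finset.sum_le_sum fun j _ => ?_
          rw [norm_smul, norm_pow, hωn, one_pow, one_mul]
          have hu : ‖ω ^ j • x‖ < 1 := by
            rw [norm_smul, norm_pow, hωn, one_pow, one_mul]; exact hx
          have := hM (ω ^ j • x) hu
          rwa [smul_smul] at this
      _ = n * M := by rw [Finset.sum_const, Finset.card_range, nsmul_eq_mul]
  rw [hT, hnorm1] at hnorm2
  have hn0 : (0 : ℝ) < n := by positivity
  nlinarith [hnorm2, hn0]

lemma growth_bound {N : ℕ} {P : X → Y} {Pk : ℕ → X → Y}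
    (hPk : ∀ k, k ≤ N → IsHomPoly k (Pk k))
    (hP : ∀ x, P x = ∑ k ∈ Finset.range (N + 1), Pk k x)
    {s t : ℝ} (hs : 0 < s) (hst : s ≤ t) {M : ℝ}
    (hM : ∀ u : X, ‖u‖ < 1 → ‖P ((s : ℂ) • u)‖ ≤ M)
    {x : X} (hx : ‖x‖ < 1) :
    ‖P ((t : ℂ) • x)‖ ≤ ((N : ℝ) + 1) * (t / s) ^ N * M := by
  have hM0 : 0 ≤ M := le_trans (norm_nonneg _) (hM 0 (by simp))
  have ht : 0 < t := lt_of_lt_of_le hs hst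
  have hts : 1 ≤ t / s := (one_le_div hs).mpr hst
  have hexp : P ((t : ℂ) • x) = ∑ k ∈ Finset.range (N + 1), ((t : ℂ)) ^ k • Pk k x := by
    rw [hP]
    exact Finset.sum_congr rfl fun k hk =>
      homPoly_smul (hPk k (Nat.lt_succ_iff.mp (Finset.mem_range.mp hk))) _ x
  rw [hexp]
  calc ‖∑ k ∈ Finset.range (N + 1), ((t : ℂ)) ^ k • Pk k x‖
      ≤ ∑ k ∈ Finset.range (N + 1), ‖((t : ℂ)) ^ k • Pk k x‖ := norm_sum_le _ _
    _ ≤ ∑ _k ∈ Finset.range (N + 1), (t / s) ^ N * M := by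
        refine Finset.sum_le_sum fun k hk => ?_
        have hk' : k ≤ N := Nat.lt_succ_iff.mp (Finset.mem_range.mp hk)
        have hcoeff := coeff_bound hPk hP hs hM hx hk'
        rw [norm_smul, norm_pow]
        have htc : ‖(t : ℂ)‖ = t := by simp [abs_of_pos ht]
        rw [htc]
        have h1 : t ^ k * ‖Pk k x‖ = (t / s) ^ k * (s ^ k * ‖Pk k x‖) := by
          rw [div_pow, ← mul_assoc, div_mul_cancel₀ _ (pow_ne_zero k hs.ne')]
        rw [h1]
        have h2 : (t / s) ^ k * (s ^ k * ‖Pk k x‖) ≤ (t / s) ^ k * M :=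
          mul_le_mul_of_nonneg_left hcoeff (by positivity)
        have h3 : (t / s) ^ k ≤ (t / s) ^ N := pow_le_pow_right₀ hts hk'
        nlinarith [pow_nonneg (le_trans zero_le_one hts) k]
    _ = ((N : ℝ) + 1) * (t / s) ^ N * M := by
        rw [Finset.sum_const, Finset.card_range, nsmul_eq_mul]; push_cast; ring

lemma sNorm_le {s : ℝ} {f : X → Y} {M : ℝ}
    (h : ∀ u : X, ‖u‖ < 1 → ‖f ((s : ℂ) • u)‖ ≤ M) : sNorm s f ≤ M := by
  have h0 : 0 ≤ M := le_trans (norm_nonneg _) (h 0 (by simp))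
  exact Real.sSup_le (by rintro _ ⟨u, hu, rfl⟩; exact h u hu) h0

lemma le_sNorm {s : ℝ} {f : X → Y} {M : ℝ}
    (bdd : ∀ u : X, ‖u‖ < 1 → ‖f ((s : ℂ) • u)‖ ≤ M)
    {u : X} (hu : ‖u‖ < 1) : ‖f ((s : ℂ) • u)‖ ≤ sNorm s f :=
  le_csSup ⟨M, by rintro _ ⟨v, hv, rfl⟩; exact bdd v hv⟩ ⟨u, hu, rfl⟩

lemma sNorm_nonneg (s : ℝ) (f : X → Y) : 0 ≤ sNorm s f :=
  Real.sSup_nonneg (by rintro _ ⟨u, hu, rfl⟩; exact norm_nonneg _)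

lemma vNorm_le {f : X → Y} {M : ℝ}
    (h : ∀ u : X, ‖u‖ < 1 → (1 - ‖u‖ ^ 2) * ‖f u‖ ≤ M) (h0 : 0 ≤ M) : vNorm f ≤ M :=
  Real.sSup_le (by rintro _ ⟨u, hu, rfl⟩; exact h u hu) h0

lemma le_vNorm_s6 {f : X → Y} {M : ℝ}
    (bdd : ∀ u : X, ‖u‖ < 1 → (1 - ‖u‖ ^ 2) * ‖f u‖ ≤ M)
    {u : X} (hu : ‖u‖ < 1) : (1 - ‖u‖ ^ 2) * ‖f u‖ ≤ vNorm f :=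
  le_csSup ⟨M, by rintro _ ⟨v, hv, rfl⟩; exact bdd v hv⟩ ⟨u, hu, rfl⟩

lemma poly_bound {N : ℕ} {P : X → Y} {Pk : ℕ → X → Y}
    (hPk : ∀ k, k ≤ N → IsHomPoly k (Pk k))
    (hP : ∀ x, P x = ∑ k ∈ Finset.range (N + 1), Pk k x) :
    ∃ C : ℝ, 0 ≤ C ∧ ∀ x : X, ‖x‖ ≤ 1 → ‖P x‖ ≤ C := by
  have hk : ∀ k : ℕ, ∃ C : ℝ, 0 ≤ C ∧ (k ≤ N → ∀ x : X, ‖x‖ ≤ 1 → ‖Pk k x‖ ≤ C) := by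
    intro k
    by_cases h : k ≤ N
    · obtain ⟨A, hA⟩ := hPk k h
      refine ⟨‖A‖, norm_nonneg _, fun _ x hx => ?_⟩
      rw [hA]
      calc ‖A fun _ => x‖ ≤ ‖A‖ * ∏ _i : Fin k, ‖x‖ := A.le_opNorm _
        _ ≤ ‖A‖ * 1 := by
            refine mul_le_mul_of_nonneg_left ?_ (norm_nonneg A)
            rw [Finset.prod_const]
            exact pow_le_one₀ (norm_nonneg x) hx
        _ = ‖A‖ := mul_one _
    · exact ⟨0, le_refl _, fun h' => absurd h' h⟩
  choose C hC0 hC using hk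
  refine ⟨∑ k ∈ Finset.range (N + 1), C k, Finset.sum_nonneg fun k _ => hC0 k, fun x hx => ?_⟩
  rw [hP]
  calc ‖∑ k ∈ Finset.range (N + 1), Pk k x‖
      ≤ ∑ k ∈ Finset.range (N + 1), ‖Pk k x‖ := norm_sum_le _ _
    _ ≤ ∑ k ∈ Finset.range (N + 1), C k :=
        Finset.sum_le_sum fun k hk' => hC k (Nat.lt_succ_iff.mp (Finset.mem_range.mp hk')) x hx

end aux

set_option maxHeartbeats 1000000 in
/-- for each `N ≥ 1` there is `s(N) ∈ (0,1)` such that for all complex Banach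
spaces `X, Y` and every polynomial `P` of degree at most `N`,
`‖P‖_v = sup_{s ∈ [0, s(N)]} (1-s²)‖P‖_s`. -/

theorem stmt6 (N : ℕ) (hN : 1 ≤ N) :
    ∃ sN : ℝ, sN ∈ Set.Ioo (0 : ℝ) 1 ∧
      ∀ (X Y : Type) [NormedAddCommGroup X] [NormedSpace ℂ X] [CompleteSpace X]
        [NormedAddCommGroup Y] [NormedSpace ℂ Y] [CompleteSpace Y],
        ∀ P : X → Y, IsPolyDeg N P →
          vNorm P = sSup ((fun s : ℝ => (1 - s ^ 2) * sNorm s P) '' Set.Icc 0 sN) := by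
  have hK : (0 : ℝ) < ((N : ℝ) + 1) * 2 ^ N := by positivity
  have h2N : (2 : ℝ) ≤ 2 ^ N := by
    calc (2 : ℝ) = 2 ^ 1 := (pow_one 2).symm
      _ ≤ 2 ^ N := pow_le_pow_right₀ one_le_two hN
  have hN2 : (2 : ℝ) ≤ (N : ℝ) + 1 := by
    have h1 : (1 : ℝ) ≤ (N : ℝ) := by exact_mod_cast hN
    linarith
  obtain ⟨δ, hδpos, hδle, hδmul⟩ :
      ∃ d : ℝ, 0 < d ∧ d ≤ 3 / 16 ∧ d * (((N : ℝ) + 1) * 2 ^ N) = 3 / 4 := by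
    refine ⟨3 / (4 * (((N : ℝ) + 1) * 2 ^ N)), by positivity, ?_, ?_⟩
    · rw [div_le_div_iff₀ (by positivity) (by norm_num)]
      nlinarith
    · field_simp
  obtain ⟨sN, hsNpos, hsN1, hhalf, hsNsq⟩ :
      ∃ r : ℝ, 0 < r ∧ r < 1 ∧ 1 / 2 ≤ r ∧ r ^ 2 = 1 - δ := by
    have h1δ : 0 < 1 - δ := by linarith
    refine ⟨Real.sqrt (1 - δ), Real.sqrt_pos.mpr h1δ, ?_, ?_, Real.sq_sqrt h1δ.le⟩
    · nlinarith [Real.sq_sqrt h1δ.le, Real.sqrt_pos.mpr h1δ]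
    · rw [show (1 : ℝ) / 2 = Real.sqrt (1 / 4) by
        rw [show (1 : ℝ) / 4 = (1 / 2) ^ 2 by norm_num, Real.sqrt_sq (by norm_num)]]
      exact Real.sqrt_le_sqrt (by linarith)
  refine ⟨sN, ⟨hsNpos, hsN1⟩, ?_⟩
  intro X Y _ _ _ _ _ _ P hPoly
  obtain ⟨Pk, hPk, hP⟩ := hPoly
  obtain ⟨C, hC0, hC⟩ := poly_bound hPk hP
  have hball : ∀ s : ℝ, 0 ≤ s → s ≤ 1 → ∀ u : X, ‖u‖ < 1 → ‖P ((s : ℂ) • u)‖ ≤ C := by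
    intro s hs0 hs1 u hu
    apply hC
    rw [norm_smul]
    have hns : ‖(s : ℂ)‖ = s := by simp [abs_of_nonneg hs0]
    rw [hns]
    nlinarith [norm_nonneg u]
  have hsN0 : ∀ s : ℝ, 0 ≤ sNorm s P := fun s => sNorm_nonneg s P
  set L := sSup ((fun s : ℝ => (1 - s ^ 2) * sNorm s P) '' Set.Icc 0 sN) with hL
  have hbddim : BddAbove ((fun s : ℝ => (1 - s ^ 2) * sNorm s P) '' Set.Icc 0 sN) := by
    refine ⟨C, ?_⟩
    rintro _ ⟨s, ⟨h0, h1⟩, rfl⟩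
    have hs1 : s ≤ 1 := le_trans h1 hsN1.le
    have h2 : sNorm s P ≤ C := sNorm_le (hball s h0 hs1)
    show (1 - s ^ 2) * sNorm s P ≤ C
    nlinarith [hsN0 s, sq_nonneg s, mul_nonneg (sq_nonneg s) (hsN0 s)]
  have hmemL : ∀ s : ℝ, 0 ≤ s → s ≤ sN → (1 - s ^ 2) * sNorm s P ≤ L := fun s h0 h1 =>
    le_csSup hbddim ⟨s, ⟨h0, h1⟩, rfl⟩
  have hL0 : 0 ≤ L := by
    have e := hmemL 0 le_rfl hsNpos.le
    nlinarith [hsN0 0]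
  have hkey : ∀ t : ℝ, sN < t → t < 1 →
      (1 - t ^ 2) * sNorm t P ≤ (1 - (t / 2) ^ 2) * sNorm (t / 2) P := by
    intro t htl ht1
    have ht0 : 0 < t := lt_trans hsNpos htl
    have hs0 : 0 < t / 2 := by linarith
    have hsle : t / 2 ≤ 1 := by linarith
    have hMb : ∀ u : X, ‖u‖ < 1 → ‖P (((t / 2 : ℝ) : ℂ) • u)‖ ≤ sNorm (t / 2) P :=
      fun u hu => le_sNorm (hball (t / 2) hs0.le hsle) hu
    have hgrow : sNorm t P ≤ ((N : ℝ) + 1) * 2 ^ N * sNorm (t / 2) P := by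
      apply sNorm_le
      intro u hu
      have hg := growth_bound hPk hP hs0 (div_le_self ht0.le one_le_two) hMb hu
      rwa [show t / (t / 2) = 2 by field_simp] at hg
    have h1t : 0 ≤ 1 - t ^ 2 := by nlinarith
    have hstep : (1 - t ^ 2) * sNorm t P
        ≤ (1 - t ^ 2) * (((N : ℝ) + 1) * 2 ^ N * sNorm (t / 2) P) :=
      mul_le_mul_of_nonneg_left hgrow h1t
    have htsq : 1 - δ < t ^ 2 := by nlinarith
    have hfinal : (1 - t ^ 2) * (((N : ℝ) + 1) * 2 ^ N) ≤ 1 - (t / 2) ^ 2 := by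
      have h1 : (1 - t ^ 2) ≤ δ := by linarith
      have h2 : δ * (((N : ℝ) + 1) * 2 ^ N) = 3 / 4 := hδmul
      have h3 : (1 - t ^ 2) * (((N : ℝ) + 1) * 2 ^ N) ≤ 3 / 4 := by
        calc (1 - t ^ 2) * (((N : ℝ) + 1) * 2 ^ N)
            ≤ δ * (((N : ℝ) + 1) * 2 ^ N) := mul_le_mul_of_nonneg_right h1 hK.le
          _ = 3 / 4 := h2
      nlinarith
    calc (1 - t ^ 2) * sNorm t P
        ≤ (1 - t ^ 2) * (((N : ℝ) + 1) * 2 ^ N) * sNorm (t / 2) P := by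
          rw [mul_assoc]; exact hstep
      _ ≤ (1 - (t / 2) ^ 2) * sNorm (t / 2) P :=
          mul_le_mul_of_nonneg_right hfinal (hsN0 _)
  have hvb : ∀ u : X, ‖u‖ < 1 → (1 - ‖u‖ ^ 2) * ‖P u‖ ≤ C := by
    intro u hu
    have h1 : ‖P u‖ ≤ C := hC u hu.le
    calc (1 - ‖u‖ ^ 2) * ‖P u‖ ≤ 1 * ‖P u‖ :=
          mul_le_mul_of_nonneg_right (by linarith [sq_nonneg ‖u‖]) (norm_nonneg _)
      _ = ‖P u‖ := one_mul _
      _ ≤ C := h1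
  apply le_antisymm
  · -- vNorm P ≤ L
    apply Real.sSup_le _ hL0
    rintro _ ⟨x, hx, rfl⟩
    simp only [Set.mem_setOf_eq] at hx
    show (1 - ‖x‖ ^ 2) * ‖P x‖ ≤ L
    apply le_of_forall_pos_le_add
    intro ε hε
    have hB0 : 0 ≤ ‖P x‖ := norm_nonneg _
    have hr0 : 0 ≤ ‖x‖ := norm_nonneg _
    obtain ⟨t, hrt, ht1, ht2⟩ :
        ∃ t : ℝ, ‖x‖ < t ∧ t < 1 ∧ t ^ 2 ≤ ‖x‖ ^ 2 + ε / (‖P x‖ + 1) := by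
      refine ⟨min ((‖x‖ + 1) / 2) (Real.sqrt (‖x‖ ^ 2 + ε / (‖P x‖ + 1))), ?_, ?_, ?_⟩
      · apply lt_min
        · linarith
        · rw [Real.lt_sqrt hr0]
          have h5 : 0 < ε / (‖P x‖ + 1) := by positivity
          linarith
      · exact lt_of_le_of_lt (min_le_left _ _) (by linarith)
      · have ha : (0:ℝ) ≤ min ((‖x‖ + 1) / 2) (Real.sqrt (‖x‖ ^ 2 + ε / (‖P x‖ + 1))) :=
          le_min (by linarith) (Real.sqrt_nonneg _)
        have hb : min ((‖x‖ + 1) / 2) (Real.sqrt (‖x‖ ^ 2 + ε / (‖P x‖ + 1)))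
            ≤ Real.sqrt (‖x‖ ^ 2 + ε / (‖P x‖ + 1)) := min_le_right _ _
        calc (min ((‖x‖ + 1) / 2) (Real.sqrt (‖x‖ ^ 2 + ε / (‖P x‖ + 1)))) ^ 2
            ≤ (Real.sqrt (‖x‖ ^ 2 + ε / (‖P x‖ + 1))) ^ 2 := by nlinarith
          _ = ‖x‖ ^ 2 + ε / (‖P x‖ + 1) := Real.sq_sqrt (by positivity)
    have ht0 : 0 < t := lt_of_le_of_lt hr0 hrt
    have hBs : ‖P x‖ ≤ sNorm t P := by
      have hu : ‖((t : ℂ))⁻¹ • x‖ < 1 := by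
        rw [norm_smul, norm_inv]
        have hnt : ‖(t : ℂ)‖ = t := by simp [abs_of_pos ht0]
        rw [hnt, inv_mul_lt_one₀]
        · exact hrt
        · exact ht0
      have hx' : P x = P ((t : ℂ) • ((t : ℂ))⁻¹ • x) := by
        rw [smul_inv_smul₀ (by exact_mod_cast ht0.ne')]
      rw [hx']
      exact le_sNorm (hball t ht0.le ht1.le) hu
    have hhtL : (1 - t ^ 2) * sNorm t P ≤ L := by
      rcases le_or_gt t sN with h | h
      · exact hmemL t ht0.le h
      · calc (1 - t ^ 2) * sNorm t P
            ≤ (1 - (t / 2) ^ 2) * sNorm (t / 2) P := hkey t h ht1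
          _ ≤ L := hmemL (t / 2) (by linarith) (by linarith)
    have h1 : (1 - t ^ 2) * ‖P x‖ ≤ (1 - t ^ 2) * sNorm t P :=
      mul_le_mul_of_nonneg_left hBs (by nlinarith)
    have h1' : (1 - t ^ 2) * ‖P x‖ ≤ L := le_trans h1 hhtL
    have h2 : (t ^ 2 - ‖x‖ ^ 2) * ‖P x‖ ≤ ε := by
      have h3 : t ^ 2 - ‖x‖ ^ 2 ≤ ε / (‖P x‖ + 1) := by linarith
      calc (t ^ 2 - ‖x‖ ^ 2) * ‖P x‖ ≤ (ε / (‖P x‖ + 1)) * ‖P x‖ :=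
            mul_le_mul_of_nonneg_right h3 hB0
        _ ≤ ε := by
            rw [div_mul_eq_mul_div, div_le_iff₀ (by linarith)]
            nlinarith
    nlinarith [h1', h2]
  · -- L ≤ vNorm P
    have hv0 : 0 ≤ vNorm P := by
      have h := le_vNorm_s6 hvb (show ‖(0 : X)‖ < 1 by simp)
      simp only [norm_zero] at h
      nlinarith [norm_nonneg (P (0 : X))]
    apply Real.sSup_le _ hv0
    rintro _ ⟨s, ⟨hs0, hssN⟩, rfl⟩
    have hs1 : s < 1 := lt_of_le_of_lt hssN hsN1
    have hpos : 0 < 1 - s ^ 2 := by nlinarith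
    have hsn : sNorm s P ≤ vNorm P / (1 - s ^ 2) := by
      apply sNorm_le
      intro u hu
      rw [le_div_iff₀ hpos]
      have hns : ‖(s : ℂ)‖ = s := by simp [abs_of_nonneg hs0]
      have hz : ‖(s : ℂ) • u‖ < 1 := by
        rw [norm_smul, hns]; nlinarith [norm_nonneg u]
      have hz2 : ‖(s : ℂ) • u‖ ≤ s := by
        rw [norm_smul, hns]
        nlinarith [norm_nonneg u]
      have hv := le_vNorm_s6 hvb hz
      have h4 : 0 ≤ (s - ‖(s : ℂ) • u‖) * (s + ‖(s : ℂ) • u‖) * ‖P ((s : ℂ) • u)‖ :=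
        mul_nonneg (mul_nonneg (sub_nonneg.mpr hz2)
          (add_nonneg hs0 (norm_nonneg _))) (norm_nonneg _)
      nlinarith [hv, h4]
    calc (1 - s ^ 2) * sNorm s P
        ≤ (1 - s ^ 2) * (vNorm P / (1 - s ^ 2)) := mul_le_mul_of_nonneg_left hsn hpos.le
      _ = vNorm P := by field_simp
end

section
/- Let X and Y be complex Banach spaces, N ≥ 1, α ∈ (0,1), and set s(α,N) := (1 − α · N!/N^{N+1})^{1/N}, which lies in (0,1). Then for every polynomial P : X → Y of degree at most N one has ‖P‖_{s(α,N)} ≥ (1 − α) · ‖P‖_∞. -/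
open Filter Topology Metric

/-- with `s(α,N) = (1 - α N!/N^{N+1})^{1/N} ∈ (0,1)`, every polynomial of
degree at most `N` satisfies `‖P‖_{s(α,N)} ≥ (1-α)‖P‖_∞`. -/
theorem stmt7 {X Y : Type*} [NormedAddCommGroup X] [NormedSpace ℂ X] [CompleteSpace X]
    [NormedAddCommGroup Y] [NormedSpace ℂ Y] [CompleteSpace Y]
    (N : ℕ) (hN : 1 ≤ N) (α : ℝ) (hα : α ∈ Set.Ioo (0 : ℝ) 1) :
    (1 - α * (Nat.factorial N : ℝ) / (N : ℝ) ^ (N + 1)) ^ ((1 : ℝ) / N)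
      ∈ Set.Ioo (0 : ℝ) 1 ∧
    ∀ P : X → Y, IsPolyDeg N P →
      sNorm ((1 - α * (Nat.factorial N : ℝ) / (N : ℝ) ^ (N + 1)) ^ ((1 : ℝ) / N)) P ≥
        (1 - α) * supNorm P := by
  obtain ⟨hα0, hα1⟩ := hα
  have hNpos : (0:ℝ) < N := by exact_mod_cast hN
  have hNne : (N:ℝ) ≠ 0 := ne_of_gt hNpos
  set t : ℝ := 1 - α * (Nat.factorial N : ℝ) / (N : ℝ) ^ (N + 1) with ht
  have hfacN : (Nat.factorial N : ℝ) ≤ (N:ℝ) ^ (N+1) := by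
    exact_mod_cast (Nat.factorial_le_pow N).trans (Nat.pow_le_pow_right hN (Nat.le_succ N))
  have hNpow : (0:ℝ) < (N:ℝ) ^ (N+1) := by positivity
  have hfrac0 : (0:ℝ) < (Nat.factorial N : ℝ) / (N:ℝ)^(N+1) := by positivity
  have hfrac1 : (Nat.factorial N : ℝ) / (N:ℝ)^(N+1) ≤ 1 := by
    rw [div_le_one hNpow]; exact hfacN
  have ht0 : 0 < t := by
    have : α * (Nat.factorial N : ℝ) / (N:ℝ)^(N+1) < 1 := by
      rw [mul_div_assoc]
      calc α * ((Nat.factorial N : ℝ) / (N:ℝ)^(N+1)) ≤ α * 1 := by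
            exact mul_le_mul_of_nonneg_left hfrac1 hα0.le
        _ < 1 := by linarith
    rw [ht]; linarith
  have ht1 : t < 1 := by
    have : 0 < α * (Nat.factorial N : ℝ) / (N:ℝ)^(N+1) := by positivity
    simp only [ht]; linarith
  have htα : 1 - α ≤ t := by
    have : α * (Nat.factorial N : ℝ) / (N:ℝ)^(N+1) ≤ α := by
      rw [mul_div_assoc]
      calc α * ((Nat.factorial N : ℝ) / (N:ℝ)^(N+1)) ≤ α * 1 :=
            mul_le_mul_of_nonneg_left hfrac1 hα0.le
        _ = α := mul_one α
    simp only [ht]; linarith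
  set s : ℝ := t ^ ((1:ℝ)/N) with hs
  have hs0 : 0 < s := Real.rpow_pos_of_pos ht0 _
  have hs1 : s < 1 := Real.rpow_lt_one ht0.le ht1 (by positivity)
  have hsN : s ^ N = t := by
    rw [hs, ← Real.rpow_natCast (t ^ ((1:ℝ)/N)) N, ← Real.rpow_mul ht0.le,
      one_div, inv_mul_cancel₀ hNne, Real.rpow_one]
  refine ⟨⟨hs0, hs1⟩, ?_⟩
  intro P hP
  obtain ⟨Pk, hPk, hPsum⟩ := hP
  -- homogeneity
  have hhom : ∀ k, k ≤ N → ∀ (c : ℂ) (x : X), Pk k (c • x) = c ^ k • Pk k x := by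
    intro k hk c x
    obtain ⟨A, hA⟩ := hPk k hk
    rw [hA, hA]
    have := A.map_smul_univ (fun _ => c) (fun _ => x)
    simpa using this
  -- a uniform bound on the closed unit ball
  have hbound : ∃ C : ℝ, 0 ≤ C ∧ ∀ x : X, ‖x‖ ≤ 1 → ‖P x‖ ≤ C := by
    have h1 : ∀ k, ∃ Ck : ℝ, 0 ≤ Ck ∧ (k ≤ N → ∀ x : X, ‖x‖ ≤ 1 → ‖Pk k x‖ ≤ Ck) := by
      intro k
      by_cases hk : k ≤ N
      · obtain ⟨A, hA⟩ := hPk k hk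
        refine ⟨‖A‖, norm_nonneg _, fun _ x hx => ?_⟩
        rw [hA]
        calc ‖A fun _ => x‖ ≤ ‖A‖ * ∏ _i : Fin k, ‖x‖ := A.le_opNorm _
          _ = ‖A‖ * ‖x‖ ^ k := by simp
          _ ≤ ‖A‖ * 1 :=
              mul_le_mul_of_nonneg_left (pow_le_one₀ (norm_nonneg x) hx) (norm_nonneg A)
          _ = ‖A‖ := mul_one _
      · exact ⟨0, le_refl 0, fun h => absurd h hk⟩
    choose C hC0 hC using h1
    refine ⟨∑ k ∈ Finset.range (N+1), C k, Finset.sum_nonneg fun k _ => hC0 k, fun x hx => ?_⟩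
    rw [hPsum]
    exact (norm_sum_le _ _).trans (Finset.sum_le_sum fun k hk =>
      hC k (Nat.lt_succ_iff.mp (Finset.mem_range.mp hk)) x hx)
  obtain ⟨C, hC0, hC⟩ := hbound
  -- sNorm set is bounded above and nonempty
  have hSbdd : BddAbove ((fun x => ‖P ((s : ℂ) • x)‖) '' {x : X | ‖x‖ < 1}) := by
    refine ⟨C, fun y hy => ?_⟩
    obtain ⟨x, hx, rfl⟩ := hy
    apply hC
    rw [norm_smul]
    have : ‖(s:ℂ)‖ = s := by
      rw [Complex.norm_real, Real.norm_eq_abs, abs_of_pos hs0]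
    rw [this]
    nlinarith [Set.mem_setOf_eq ▸ hx, hs0.le, hs1.le, norm_nonneg x]
  have hSne : ((fun x => ‖P ((s : ℂ) • x)‖) '' {x : X | ‖x‖ < 1}).Nonempty :=
    ⟨_, ⟨(0 : X), by simp, rfl⟩⟩
  have hsnn : 0 ≤ sNorm s P := by
    have := le_csSup hSbdd ⟨(0 : X), by simp, rfl⟩
    exact (norm_nonneg _).trans this
  -- the key estimate via the maximum modulus principle
  have key : ∀ x : X, ‖x‖ < 1 → t * ‖P x‖ ≤ sNorm s P := by
    intro x hx
    set f : ℂ → Y := fun z => ∑ k ∈ Finset.range (N+1), ((s:ℂ)^k * z^(N-k)) • Pk k x with hf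
    have hdiff : DiffContOnCl ℂ f (ball (0:ℂ) 1) := by
      apply Differentiable.diffContOnCl
      apply Differentiable.fun_sum
      intro k _
      exact ((differentiable_const _).mul (differentiable_pow _)).smul_const _
    have hfront : ∀ z ∈ frontier (ball (0:ℂ) 1), ‖f z‖ ≤ sNorm s P := by
      intro z hz
      rw [frontier_ball (0:ℂ) one_ne_zero, mem_sphere_iff_norm, sub_zero] at hz
      have hzne : z ≠ 0 := by
        intro h; rw [h, norm_zero] at hz; norm_num at hz
      have hfz : f z = z ^ N • P ((s:ℂ) • z⁻¹ • x) := by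
        rw [hPsum, Finset.smul_sum]
        refine Finset.sum_congr rfl fun k hk => ?_
        have hkN : k ≤ N := Nat.lt_succ_iff.mp (Finset.mem_range.mp hk)
        rw [smul_smul, hhom k hkN ((s:ℂ) * z⁻¹) x, smul_smul, mul_pow,
          pow_sub₀ z hzne hkN, inv_pow]
        ring_nf
      rw [hfz, norm_smul, norm_pow, hz, one_pow, one_mul]
      refine le_csSup hSbdd ⟨z⁻¹ • x, ?_, rfl⟩
      simp only [Set.mem_setOf_eq, norm_smul, norm_inv, hz, inv_one, one_mul]
      exact hx
    have hmem : (s:ℂ) ∈ closure (ball (0:ℂ) 1) := by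
      apply subset_closure
      simp only [mem_ball, dist_zero_right, Complex.norm_real, Real.norm_eq_abs,
        abs_of_pos hs0]
      exact hs1
    have hmax := Complex.norm_le_of_forall_mem_frontier_norm_le isBounded_ball hdiff hfront hmem
    have hfs : f (s:ℂ) = ((s:ℂ)) ^ N • P x := by
      rw [hPsum, Finset.smul_sum]
      refine Finset.sum_congr rfl fun k hk => ?_
      have hkN : k ≤ N := Nat.lt_succ_iff.mp (Finset.mem_range.mp hk)
      rw [← pow_add, Nat.add_sub_cancel' hkN]
    rw [hfs, norm_smul, norm_pow, Complex.norm_real, Real.norm_eq_abs,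
      abs_of_pos hs0, hsN] at hmax
    exact hmax
  -- conclude
  have hsup_le : supNorm P ≤ sNorm s P / t := by
    apply Real.sSup_le
    · rintro y ⟨x, hx, rfl⟩
      rw [le_div_iff₀ ht0, mul_comm]
      exact key x hx
    · positivity
  have : t * supNorm P ≤ sNorm s P := by
    rw [← le_div_iff₀' ht0]
    exact hsup_le
  have hsupnn : 0 ≤ supNorm P := by
    apply Real.sSup_nonneg
    rintro y ⟨x, _, rfl⟩
    exact norm_nonneg _
  calc (1 - α) * supNorm P ≤ t * supNorm P := mul_le_mul_of_nonneg_right htα hsupnn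
    _ ≤ sNorm s P := this
end

section
/- Let X and Y be complex Banach spaces, N ≥ 1, α ∈ (0,1), and set s(α,N) := (1 − α · N!/N^{N+1})^{1/N}. Then for every polynomial P : X → Y of degree at most N one has ‖P‖_v ≥ (1 − s(α,N)²)(1 − α) · ‖P‖_∞. In particular, the norms ‖·‖_∞ and ‖·‖_v are equivalent on the space of polynomials of degree at most N. -/
open Filter Topology Metric

lemma keyLemma {X Y : Type*} [NormedAddCommGroup X] [NormedSpace ℂ X]
    [NormedAddCommGroup Y] [NormedSpace ℂ Y] [CompleteSpace Y]
    (N : ℕ) (s : ℝ) (hs0 : 0 < s) (hs1 : s < 1)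
    (P : X → Y) (hP : IsPolyDeg N P) :
    0 ≤ supNorm P ∧ (1 - s ^ 2) * s ^ N * supNorm P ≤ vNorm P ∧ vNorm P ≤ supNorm P := by
  obtain ⟨Pk, hPk, hsum⟩ := hP
  have hA' : ∀ k, ∃ A : ContinuousMultilinearMap ℂ (fun _ : Fin k => X) Y,
      k ≤ N → ∀ x, Pk k x = A (fun _ => x) := by
    intro k
    by_cases hk : k ≤ N
    · obtain ⟨A, h⟩ := hPk k hk; exact ⟨A, fun _ => h⟩
    · exact ⟨0, fun h => absurd h hk⟩
  choose A hA using hA'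
  set C₀ : ℝ := ∑ k ∈ Finset.range (N + 1), ‖A k‖ with hC₀
  have hsC : ‖((s : ℝ) : ℂ)‖ = s := by
    rw [Complex.norm_real, Real.norm_eq_abs, abs_of_pos hs0]
  have hPb : ∀ x : X, ‖x‖ ≤ 1 → ‖P x‖ ≤ C₀ := by
    intro x hxle
    rw [hsum]
    refine (norm_sum_le _ _).trans (Finset.sum_le_sum fun k hk => ?_)
    have hk' : k ≤ N := Nat.lt_succ_iff.mp (Finset.mem_range.mp hk)
    rw [hA k hk']
    calc ‖A k (fun _ => x)‖ ≤ ‖A k‖ * ∏ _i : Fin k, ‖x‖ := (A k).le_opNorm _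
      _ = ‖A k‖ * ‖x‖ ^ k := by simp
      _ ≤ ‖A k‖ * 1 :=
          mul_le_mul_of_nonneg_left (pow_le_one₀ (norm_nonneg _) hxle) (norm_nonneg _)
      _ = ‖A k‖ := mul_one _
  have hne : ({x : X | ‖x‖ < 1}).Nonempty := ⟨0, by simp⟩
  have hbddSup : BddAbove ((fun x => ‖P x‖) '' {x : X | ‖x‖ < 1}) := by
    refine ⟨C₀, ?_⟩; rintro y ⟨x, hx, rfl⟩; exact hPb x hx.le
  have hbddS : BddAbove ((fun x => ‖P ((s : ℂ) • x)‖) '' {x : X | ‖x‖ < 1}) := by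
    refine ⟨C₀, ?_⟩; rintro y ⟨x, hx, rfl⟩
    have hx' : ‖x‖ < 1 := hx
    refine hPb _ ?_
    rw [norm_smul, hsC]
    nlinarith [norm_nonneg x, mul_pos hs0 (show (0:ℝ) < 1 - ‖x‖ by linarith)]
  have hbddV : BddAbove ((fun x => (1 - ‖x‖ ^ 2) * ‖P x‖) '' {x : X | ‖x‖ < 1}) := by
    refine ⟨C₀, ?_⟩; rintro y ⟨x, hx, rfl⟩
    have hx' : ‖x‖ < 1 := hx
    dsimp only
    nlinarith [mul_nonneg (sq_nonneg ‖x‖) (norm_nonneg (P x)), hPb x hx'.le,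
      norm_nonneg (P x)]
  have hhom : ∀ (c : ℂ) (x : X),
      P (c • x) = ∑ k ∈ Finset.range (N + 1), c ^ k • Pk k x := by
    intro c x
    rw [hsum]
    refine Finset.sum_congr rfl fun k hk => ?_
    have hk' : k ≤ N := Nat.lt_succ_iff.mp (Finset.mem_range.mp hk)
    rw [hA k hk' x, hA k hk' (c • x)]
    have := (A k).map_smul_univ (fun _ => c) (fun _ => x)
    simpa using this
  set M := sNorm s P with hM
  have hkey : ∀ x : X, ‖x‖ < 1 → s ^ N * ‖P x‖ ≤ M := by
    intro x hxlt
    set h : ℂ → Y :=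
      fun ζ => ∑ k ∈ Finset.range (N + 1), (((s : ℝ) : ℂ) ^ k * ζ ^ (N - k)) • Pk k x with hh
    have hdiff : Differentiable ℂ h := by
      refine Differentiable.fun_sum fun k hk => ?_
      exact ((differentiable_pow (N - k)).const_mul _).smul_const _
    have hfr : ∀ ζ : ℂ, ζ ∈ sphere (0 : ℂ) 1 → ‖h ζ‖ ≤ M := by
      intro ζ hζ
      have hζ1 : ‖ζ‖ = 1 := by simpa using hζ
      have hζ0 : ζ ≠ 0 := by
        intro h0; rw [h0] at hζ1; simp at hζ1
      have hx' : ‖ζ⁻¹ • x‖ < 1 := by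
        rw [norm_smul, norm_inv, hζ1]; simpa using hxlt
      have heq : h ζ = ζ ^ N • P ((((s : ℝ) : ℂ) * ζ⁻¹) • x) := by
        rw [hhom, Finset.smul_sum]
        refine Finset.sum_congr rfl fun k hk => ?_
        have hk' : k ≤ N := Nat.lt_succ_iff.mp (Finset.mem_range.mp hk)
        rw [smul_smul]
        congr 1
        have hpow : ζ ^ N = ζ ^ (N - k) * ζ ^ k := by
          rw [← pow_add, Nat.sub_add_cancel hk']
        field_simp
        rw [hpow, div_pow]; field_simp
      have hmem : ‖P ((s : ℂ) • (ζ⁻¹ • x))‖ ∈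
          (fun x => ‖P ((s : ℂ) • x)‖) '' {x : X | ‖x‖ < 1} := ⟨ζ⁻¹ • x, hx', rfl⟩
      have : ‖h ζ‖ = ‖P ((s : ℂ) • (ζ⁻¹ • x))‖ := by
        rw [heq, norm_smul, norm_pow, hζ1, one_pow, one_mul, smul_smul]
      rw [this]
      exact le_csSup hbddS hmem
    have hmm : ‖h ((s : ℝ) : ℂ)‖ ≤ M := by
      refine Complex.norm_le_of_forall_mem_frontier_norm_le (U := ball (0 : ℂ) 1) isBounded_ball
        hdiff.diffContOnCl ?_ ?_
      · intro ζ hζ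
        rw [frontier_ball (0 : ℂ) one_ne_zero] at hζ
        exact hfr ζ hζ
      · rw [closure_ball (0 : ℂ) one_ne_zero]
        rw [mem_closedBall, dist_zero_right, hsC]
        exact hs1.le
    have hhs : h ((s : ℝ) : ℂ) = ((s : ℝ) : ℂ) ^ N • P x := by
      rw [hsum x, Finset.smul_sum]
      refine Finset.sum_congr rfl fun k hk => ?_
      have hk' : k ≤ N := Nat.lt_succ_iff.mp (Finset.mem_range.mp hk)
      congr 1
      rw [← pow_add, Nat.add_sub_cancel' hk']
    rw [hhs, norm_smul, norm_pow, hsC] at hmm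
    exact hmm
  have hsupNN : 0 ≤ supNorm P :=
    (norm_nonneg (P 0)).trans (le_csSup hbddSup ⟨0, by simp, rfl⟩)
  have hsq : 0 < 1 - s ^ 2 := by nlinarith
  have h1 : supNorm P * s ^ N ≤ M := by
    rw [← le_div_iff₀ (pow_pos hs0 N)]
    refine csSup_le (hne.image _) ?_
    rintro y ⟨x, hx, rfl⟩
    rw [le_div_iff₀ (pow_pos hs0 N), mul_comm]
    exact hkey x hx
  have h2 : M * (1 - s ^ 2) ≤ vNorm P := by
    rw [← le_div_iff₀ hsq]
    refine csSup_le (hne.image _) ?_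
    rintro y ⟨x, hx, rfl⟩
    rw [le_div_iff₀ hsq]
    have hmemV : (1 - ‖(s : ℂ) • x‖ ^ 2) * ‖P ((s : ℂ) • x)‖ ∈
        (fun x => (1 - ‖x‖ ^ 2) * ‖P x‖) '' {x : X | ‖x‖ < 1} := by
      refine ⟨(s : ℂ) • x, ?_, rfl⟩
      have hx' : ‖x‖ < 1 := hx
      rw [Set.mem_setOf_eq, norm_smul, hsC]
      nlinarith [norm_nonneg x, mul_pos hs0 (show (0:ℝ) < 1 - ‖x‖ by linarith)]
    have hx' : ‖x‖ < 1 := hx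
    have hle : (1 - ‖(s : ℂ) • x‖ ^ 2) * ‖P ((s : ℂ) • x)‖ ≤ vNorm P :=
      le_csSup hbddV hmemV
    have hnrm : ‖(s : ℂ) • x‖ = s * ‖x‖ := by rw [norm_smul, hsC]
    rw [hnrm] at hle
    dsimp only
    have key3 : 0 ≤ ‖P ((s : ℂ) • x)‖ * (s ^ 2 * (1 - ‖x‖ ^ 2)) :=
      mul_nonneg (norm_nonneg _) (mul_nonneg (sq_nonneg s)
        (by nlinarith [norm_nonneg x]))
    nlinarith [hle, key3]
  have hMnn : 0 ≤ M :=
    (norm_nonneg _).trans (le_csSup hbddS ⟨0, by simp, rfl⟩)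
  refine ⟨hsupNN, ?_, ?_⟩
  · nlinarith [pow_pos hs0 N, h1, h2]
  · refine csSup_le (hne.image _) ?_
    rintro y ⟨x, hx, rfl⟩
    have hx' : ‖x‖ < 1 := hx
    dsimp only
    have hsup : ‖P x‖ ≤ supNorm P := le_csSup hbddSup ⟨x, hx, rfl⟩
    nlinarith [mul_nonneg (sq_nonneg ‖x‖) (norm_nonneg (P x)), norm_nonneg (P x), hsup]

/-- with `s(α,N) = (1 - α N!/N^{N+1})^{1/N}`, every polynomial of degree at
most `N` satisfies `‖P‖_v ≥ (1 - s(α,N)²)(1-α)‖P‖_∞`; in particular `‖·‖_∞` and `‖·‖_v`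
are equivalent on polynomials of degree at most `N`. -/
theorem stmt8 {X Y : Type*} [NormedAddCommGroup X] [NormedSpace ℂ X] [CompleteSpace X]
    [NormedAddCommGroup Y] [NormedSpace ℂ Y] [CompleteSpace Y]
    (N : ℕ) (hN : 1 ≤ N) (α : ℝ) (hα : α ∈ Set.Ioo (0 : ℝ) 1) :
    (∀ P : X → Y, IsPolyDeg N P →
      vNorm P ≥
        (1 - ((1 - α * (Nat.factorial N : ℝ) / (N : ℝ) ^ (N + 1)) ^ ((1 : ℝ) / N)) ^ 2) *
          (1 - α) * supNorm P) ∧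
    ∃ c C : ℝ, 0 < c ∧ 0 < C ∧ ∀ P : X → Y, IsPolyDeg N P →
      c * supNorm P ≤ vNorm P ∧ vNorm P ≤ C * supNorm P := by
  obtain ⟨hα0, hα1⟩ := hα
  have hNpos : (0 : ℝ) < (N : ℝ) := by exact_mod_cast Nat.pos_of_ne_zero (by omega)
  set b : ℝ := 1 - α * (Nat.factorial N : ℝ) / (N : ℝ) ^ (N + 1) with hb
  have hfacpos : (0 : ℝ) < (Nat.factorial N : ℝ) := by
    exact_mod_cast Nat.factorial_pos N
  have hNppos : (0 : ℝ) < (N : ℝ) ^ (N + 1) := pow_pos hNpos _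
  have hratio : (Nat.factorial N : ℝ) ≤ (N : ℝ) ^ (N + 1) := by
    have h1 : (Nat.factorial N : ℝ) ≤ (N : ℝ) ^ N := by
      exact_mod_cast Nat.factorial_le_pow N
    have h2 : (N : ℝ) ^ N ≤ (N : ℝ) ^ (N + 1) := by
      apply pow_le_pow_right₀ (by exact_mod_cast hN)
      omega
    linarith
  have hb0 : 0 < b := by
    rw [hb, sub_pos, div_lt_one hNppos]
    calc α * (Nat.factorial N : ℝ) < 1 * (Nat.factorial N : ℝ) := by
          exact mul_lt_mul_of_pos_right hα1 hfacpos
      _ = (Nat.factorial N : ℝ) := one_mul _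
      _ ≤ (N : ℝ) ^ (N + 1) := hratio
  have hb1 : b < 1 := by
    rw [hb]
    have : 0 < α * (Nat.factorial N : ℝ) / (N : ℝ) ^ (N + 1) :=
      div_pos (mul_pos hα0 hfacpos) hNppos
    linarith
  have hbα : 1 - α ≤ b := by
    rw [hb, sub_le_sub_iff_left, div_le_iff₀ hNppos]
    calc α * (Nat.factorial N : ℝ) ≤ α * ((N : ℝ) ^ (N + 1)) := by
          exact mul_le_mul_of_nonneg_left hratio hα0.le
      _ = α * (N : ℝ) ^ (N + 1) := rfl
  set s : ℝ := b ^ ((1 : ℝ) / N) with hsdef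
  have hs0 : 0 < s := Real.rpow_pos_of_pos hb0 _
  have hs1 : s < 1 := Real.rpow_lt_one hb0.le hb1 (by positivity)
  have hsN : s ^ N = b := by
    rw [hsdef, ← Real.rpow_natCast (b ^ ((1 : ℝ) / N)) N, ← Real.rpow_mul hb0.le,
      one_div, inv_mul_cancel₀ hNpos.ne', Real.rpow_one]
  have hsq : 0 < 1 - s ^ 2 := by nlinarith
  have main : ∀ P : X → Y, IsPolyDeg N P →
      vNorm P ≥ (1 - s ^ 2) * (1 - α) * supNorm P := by
    intro P hP
    obtain ⟨hsup, hmain, _⟩ := keyLemma N s hs0 hs1 P hP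
    have : (1 - s ^ 2) * (1 - α) * supNorm P ≤ (1 - s ^ 2) * s ^ N * supNorm P := by
      rw [hsN]
      have := mul_le_mul_of_nonneg_left hbα hsq.le
      exact mul_le_mul_of_nonneg_right this hsup
    linarith
  refine ⟨main, (1 - s ^ 2) * (1 - α), 1, ?_, one_pos, ?_⟩
  · have : 0 < 1 - α := by linarith
    positivity
  · intro P hP
    obtain ⟨hsup, hmain, hupper⟩ := keyLemma N s hs0 hs1 P hP
    exact ⟨main P hP, by linarith⟩
end

section
/- Let X be a complex Banach space and x* a continuous linear functional on X with ‖x*‖ = 1. For N ≥ 1 define f_N : X → ℂ by f_N(x) := (x*(x))^N. Then ‖f_N‖_∞ = 1 and ‖f_N‖_v = (N/(N+2))^{N/2} − (N/(N+2))^{(N+2)/2}; in particular ‖f_N‖_v → 0 as N → ∞, so the norms ‖·‖_∞ and ‖·‖_v are not equivalent on the space of all polynomials on X. -/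
open Filter Topology Metric

section stmt9aux

lemma stmt9_Mform {N : ℕ} (hN : 1 ≤ N) :
    ((N : ℝ) / (N + 2)) ^ ((N : ℝ) / 2) - ((N : ℝ) / (N + 2)) ^ (((N : ℝ) + 2) / 2)
      = (1 - (N : ℝ) / (N + 2)) * ((N : ℝ) / (N + 2)) ^ ((N : ℝ) / 2) := by
  have hn1 : (1:ℝ) ≤ (N:ℝ) := by exact_mod_cast hN
  have ha : (0:ℝ) < (N:ℝ) / ((N:ℝ) + 2) := by positivity
  rw [show ((N:ℝ) + 2) / 2 = (N:ℝ) / 2 + 1 by ring, Real.rpow_add_one ha.ne']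
  ring

lemma stmt9_amgm {N : ℕ} (hN : 1 ≤ N) {t : ℝ} (ht0 : 0 ≤ t) (ht1 : t ≤ 1) :
    (1 - t ^ 2) * t ^ N ≤
      ((N : ℝ) / (N + 2)) ^ ((N : ℝ) / 2) - ((N : ℝ) / (N + 2)) ^ (((N : ℝ) + 2) / 2) := by
  rw [stmt9_Mform hN]
  have hn1 : (1:ℝ) ≤ (N:ℝ) := by exact_mod_cast hN
  have hn0 : (0:ℝ) < (N:ℝ) := by linarith
  have hn2 : (0:ℝ) < (N:ℝ) + 2 := by linarith
  have hne : ((N:ℝ) + 2) ≠ 0 := hn2.ne'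
  have hnne : (N:ℝ) ≠ 0 := hn0.ne'
  have ha0 : (0:ℝ) < (N:ℝ) / ((N:ℝ) + 2) := by positivity
  have hu0 : (0:ℝ) ≤ t ^ 2 := sq_nonneg t
  have hu1 : t ^ 2 ≤ 1 := by nlinarith
  have h1u : (0:ℝ) ≤ 1 - t ^ 2 := by linarith
  have hw1' : (0:ℝ) ≤ (N:ℝ) / ((N:ℝ) + 2) := ha0.le
  have hw2' : (0:ℝ) ≤ 2 / ((N:ℝ) + 2) := by positivity
  have hp2 : (0:ℝ) ≤ (N:ℝ) / 2 * (1 - t ^ 2) := by positivity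
  have hsum : (N:ℝ) / ((N:ℝ) + 2) + 2 / ((N:ℝ) + 2) = 1 := by field_simp
  have H := Real.geom_mean_le_arith_mean2_weighted hw1' hw2' hu0 hp2 hsum
  have hRHS : (N:ℝ) / ((N:ℝ) + 2) * t ^ 2 + 2 / ((N:ℝ) + 2) * ((N:ℝ) / 2 * (1 - t ^ 2))
      = (N:ℝ) / ((N:ℝ) + 2) := by field_simp; ring
  rw [hRHS, Real.mul_rpow (by positivity) h1u] at H
  have hc : (0:ℝ) < ((N:ℝ) / 2) ^ (2 / ((N:ℝ) + 2)) := Real.rpow_pos_of_pos (by positivity) _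
  have H2 : (t ^ 2) ^ ((N:ℝ) / ((N:ℝ) + 2)) * (1 - t ^ 2) ^ (2 / ((N:ℝ) + 2))
      ≤ ((N:ℝ) / ((N:ℝ) + 2)) / ((N:ℝ) / 2) ^ (2 / ((N:ℝ) + 2)) := by
    rw [le_div_iff₀ hc]
    calc (t ^ 2) ^ ((N:ℝ) / ((N:ℝ) + 2)) * (1 - t ^ 2) ^ (2 / ((N:ℝ) + 2))
          * ((N:ℝ) / 2) ^ (2 / ((N:ℝ) + 2))
        = (t ^ 2) ^ ((N:ℝ) / ((N:ℝ) + 2))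
          * (((N:ℝ) / 2) ^ (2 / ((N:ℝ) + 2)) * (1 - t ^ 2) ^ (2 / ((N:ℝ) + 2))) := by ring
      _ ≤ (N:ℝ) / ((N:ℝ) + 2) := H
  have hq0 : (0:ℝ) ≤ ((N:ℝ) + 2) / 2 := by positivity
  have H3 := Real.rpow_le_rpow (by positivity) H2 hq0
  have e1 : (N:ℝ) / ((N:ℝ) + 2) * (((N:ℝ) + 2) / 2) = (N:ℝ) / 2 := by field_simp
  have hpow : (t ^ 2) ^ ((N:ℝ) / 2) = t ^ N := by
    rw [← Real.rpow_natCast t 2, ← Real.rpow_mul ht0,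
      show ((2:ℕ):ℝ) * ((N:ℝ) / 2) = ((N:ℕ):ℝ) by push_cast; ring, Real.rpow_natCast]
  have e2 : 2 / ((N:ℝ) + 2) * (((N:ℝ) + 2) / 2) = 1 := by field_simp
  have hL : ((t ^ 2) ^ ((N:ℝ) / ((N:ℝ) + 2)) * (1 - t ^ 2) ^ (2 / ((N:ℝ) + 2)))
        ^ (((N:ℝ) + 2) / 2) = (1 - t ^ 2) * t ^ N := by
    rw [Real.mul_rpow (Real.rpow_nonneg hu0 _) (Real.rpow_nonneg h1u _),
      ← Real.rpow_mul hu0, ← Real.rpow_mul h1u, e1, e2, Real.rpow_one, hpow]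
    ring
  have hR : (((N:ℝ) / ((N:ℝ) + 2)) / ((N:ℝ) / 2) ^ (2 / ((N:ℝ) + 2))) ^ (((N:ℝ) + 2) / 2)
      = (1 - (N:ℝ) / ((N:ℝ) + 2)) * ((N:ℝ) / ((N:ℝ) + 2)) ^ ((N:ℝ) / 2) := by
    rw [Real.div_rpow ha0.le hc.le, ← Real.rpow_mul (by positivity : (0:ℝ) ≤ (N:ℝ) / 2),
      e2, Real.rpow_one,
      show ((N:ℝ) + 2) / 2 = (N:ℝ) / 2 + 1 by ring, Real.rpow_add_one ha0.ne']
    generalize ((N:ℝ) / ((N:ℝ) + 2)) ^ ((N:ℝ) / 2) = B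
    field_simp
    ring
  rw [hL, hR] at H3
  exact H3

variable {X : Type*} [NormedAddCommGroup X] [NormedSpace ℂ X]

lemma stmt9_norm_le (φ : X →L[ℂ] ℂ) (hφ : ‖φ‖ = 1) (x : X) : ‖φ x‖ ≤ ‖x‖ := by
  simpa [hφ] using φ.le_opNorm x

lemma stmt9_sup (φ : X →L[ℂ] ℂ) (hφ : ‖φ‖ = 1) (N : ℕ) :
    supNorm (fun x : X => (φ x) ^ N) = 1 := by
  have hbdd : ∀ y ∈ (fun x : X => ‖(φ x) ^ N‖) '' {x : X | ‖x‖ < 1}, y ≤ 1 := by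
    rintro y ⟨x, hx, rfl⟩
    simp only [norm_pow]
    exact pow_le_one₀ (norm_nonneg _) ((stmt9_norm_le φ hφ x).trans hx.le)
  refine le_antisymm (csSup_le ⟨_, ⟨0, by simp, rfl⟩⟩ hbdd) ?_
  have htend : Tendsto (fun r : ℝ => r ^ N) (𝓝[<] (1:ℝ)) (𝓝 1) := by
    simpa using ((continuous_pow N).tendsto (1:ℝ)).mono_left nhdsWithin_le_nhds
  refine le_of_tendsto htend ?_
  filter_upwards [Ioo_mem_nhdsLT_of_mem (⟨zero_lt_one, le_refl 1⟩ : (1:ℝ) ∈ Set.Ioc 0 1)]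
    with r hr
  obtain ⟨x, hx1, hx2⟩ := φ.exists_lt_apply_of_lt_opNorm (show r < ‖φ‖ by rw [hφ]; exact hr.2)
  calc r ^ N ≤ ‖φ x‖ ^ N := pow_le_pow_left₀ hr.1.le hx2.le N
    _ ≤ _ := le_csSup ⟨1, hbdd⟩ ⟨x, hx1, by simp [norm_pow]⟩

lemma stmt9_v (φ : X →L[ℂ] ℂ) (hφ : ‖φ‖ = 1) {N : ℕ} (hN : 1 ≤ N) :
    vNorm (fun x : X => (φ x) ^ N) =
      ((N : ℝ) / (N + 2)) ^ ((N : ℝ) / 2) - ((N : ℝ) / (N + 2)) ^ (((N : ℝ) + 2) / 2) := by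
  set M : ℝ := ((N : ℝ) / (N + 2)) ^ ((N : ℝ) / 2) - ((N : ℝ) / (N + 2)) ^ (((N : ℝ) + 2) / 2)
    with hM
  have hn1 : (1:ℝ) ≤ (N:ℝ) := by exact_mod_cast hN
  have ha0 : (0:ℝ) < (N:ℝ) / ((N:ℝ) + 2) := by positivity
  have ha1 : (N:ℝ) / ((N:ℝ) + 2) < 1 := by rw [div_lt_one (by linarith)]; linarith
  have hbdd : ∀ y ∈ (fun x : X => (1 - ‖x‖ ^ 2) * ‖(φ x) ^ N‖) '' {x : X | ‖x‖ < 1},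
      y ≤ M := by
    rintro y ⟨x, hx, rfl⟩
    simp only [norm_pow]
    have h1 : ‖φ x‖ ≤ ‖x‖ := stmt9_norm_le φ hφ x
    have h2 : (1 - ‖x‖ ^ 2) * ‖φ x‖ ^ N ≤ (1 - ‖φ x‖ ^ 2) * ‖φ x‖ ^ N := by
      have : ‖φ x‖ ^ 2 ≤ ‖x‖ ^ 2 := by nlinarith [norm_nonneg (φ x)]
      exact mul_le_mul_of_nonneg_right (by linarith) (pow_nonneg (norm_nonneg _) N)
    exact h2.trans (stmt9_amgm hN (norm_nonneg _) (h1.trans hx.le))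
  refine le_antisymm (csSup_le ⟨_, ⟨0, by simp, rfl⟩⟩ hbdd) ?_
  -- lower bound
  set t₀ : ℝ := Real.sqrt ((N:ℝ) / ((N:ℝ) + 2)) with ht₀def
  have ht₀0 : 0 < t₀ := Real.sqrt_pos.2 ha0
  have ht₀1 : t₀ < 1 := by
    rw [ht₀def, ← Real.sqrt_one]
    exact Real.sqrt_lt_sqrt ha0.le ha1
  have ht₀sq : t₀ ^ 2 = (N:ℝ) / ((N:ℝ) + 2) := Real.sq_sqrt ha0.le
  have ht₀N : t₀ ^ N = ((N:ℝ) / ((N:ℝ) + 2)) ^ ((N:ℝ) / 2) := by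
    rw [← Real.rpow_natCast t₀ N, ht₀def, Real.sqrt_eq_rpow,
      ← Real.rpow_mul ha0.le, show 1 / 2 * ((N:ℕ):ℝ) = (N:ℝ) / 2 by push_cast; ring]
  have hMval : (1 - t₀ ^ 2) * t₀ ^ N = M := by
    rw [hM, stmt9_Mform hN, ht₀sq, ht₀N]
  have htend : Tendsto (fun r : ℝ => (1 - (t₀ / r) ^ 2) * t₀ ^ N) (𝓝[<] (1:ℝ))
      (𝓝 ((1 - t₀ ^ 2) * t₀ ^ N)) := by
    have h1 : ContinuousAt (fun r : ℝ => (1 - (t₀ / r) ^ 2) * t₀ ^ N) 1 := by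
      exact ((continuousAt_const.sub ((continuousAt_const.div continuousAt_id
        one_ne_zero).pow 2)).mul continuousAt_const)
    simpa using h1.tendsto.mono_left nhdsWithin_le_nhds
  rw [← hMval]
  refine le_of_tendsto htend ?_
  filter_upwards [Ioo_mem_nhdsLT_of_mem (⟨ht₀1, le_refl 1⟩ : (1:ℝ) ∈ Set.Ioc t₀ 1)]
    with r hr
  obtain ⟨x, hx1, hx2⟩ := φ.exists_lt_apply_of_lt_opNorm (show r < ‖φ‖ by rw [hφ]; exact hr.2)
  have hr0 : 0 < r := ht₀0.trans hr.1
  have hφx : 0 < ‖φ x‖ := hr0.trans hx2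
  set z : X := ((t₀ / ‖φ x‖ : ℝ) : ℂ) • x with hz
  have hφz : ‖φ z‖ = t₀ := by
    rw [hz, map_smul]
    simp only [smul_eq_mul, norm_mul, Complex.norm_real, Real.norm_eq_abs,
      abs_of_nonneg (by positivity : (0:ℝ) ≤ t₀ / ‖φ x‖)]
    exact div_mul_cancel₀ t₀ hφx.ne'
  have hznorm : ‖z‖ ≤ t₀ / r := by
    rw [hz, norm_smul]
    simp only [Complex.norm_real, Real.norm_eq_abs,
      abs_of_nonneg (by positivity : (0:ℝ) ≤ t₀ / ‖φ x‖)]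
    calc t₀ / ‖φ x‖ * ‖x‖ ≤ t₀ / ‖φ x‖ * 1 :=
          mul_le_mul_of_nonneg_left hx1.le (by positivity)
      _ = t₀ / ‖φ x‖ := mul_one _
      _ ≤ t₀ / r := by gcongr
  have hz1 : ‖z‖ < 1 := lt_of_le_of_lt hznorm ((div_lt_one hr0).2 hr.1)
  calc (1 - (t₀ / r) ^ 2) * t₀ ^ N ≤ (1 - ‖z‖ ^ 2) * t₀ ^ N := by
        have : ‖z‖ ^ 2 ≤ (t₀ / r) ^ 2 := by nlinarith [norm_nonneg z]
        exact mul_le_mul_of_nonneg_right (by linarith) (pow_nonneg ht₀0.le N)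
    _ = (1 - ‖z‖ ^ 2) * ‖(φ z) ^ N‖ := by rw [norm_pow, hφz]
    _ ≤ _ := le_csSup ⟨M, hbdd⟩ ⟨z, hz1, rfl⟩

end stmt9aux

/-- for a norm-one functional `φ` and `f_N = φ^N`, one has `‖f_N‖_∞ = 1` and
`‖f_N‖_v = (N/(N+2))^{N/2} - (N/(N+2))^{(N+2)/2} → 0`; hence no constant `C` gives
`‖·‖_∞ ≤ C ‖·‖_v` on all polynomials. -/
theorem stmt9 {X : Type*} [NormedAddCommGroup X] [NormedSpace ℂ X] [CompleteSpace X]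
    (φ : X →L[ℂ] ℂ) (hφ : ‖φ‖ = 1) :
    (∀ N : ℕ, 1 ≤ N →
      supNorm (fun x : X => (φ x) ^ N) = 1 ∧
      vNorm (fun x : X => (φ x) ^ N) =
        ((N : ℝ) / (N + 2)) ^ ((N : ℝ) / 2) - ((N : ℝ) / (N + 2)) ^ (((N : ℝ) + 2) / 2)) ∧
    Tendsto (fun N : ℕ => vNorm (fun x : X => (φ x) ^ N)) atTop (𝓝 0) ∧
    ¬ ∃ C : ℝ, 0 < C ∧ ∀ N : ℕ, 1 ≤ N →
        supNorm (fun x : X => (φ x) ^ N) ≤ C * vNorm (fun x : X => (φ x) ^ N) := by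
  have hpart1 : ∀ N : ℕ, 1 ≤ N →
      supNorm (fun x : X => (φ x) ^ N) = 1 ∧
      vNorm (fun x : X => (φ x) ^ N) =
        ((N : ℝ) / (N + 2)) ^ ((N : ℝ) / 2) - ((N : ℝ) / (N + 2)) ^ (((N : ℝ) + 2) / 2) :=
    fun N hN => ⟨stmt9_sup φ hφ N, stmt9_v φ hφ hN⟩
  have hpart2 : Tendsto (fun N : ℕ => vNorm (fun x : X => (φ x) ^ N)) atTop (𝓝 0) := by
    apply squeeze_zero' (g := fun N : ℕ => 2 / (N:ℝ))
    · filter_upwards [eventually_ge_atTop 1] with N hN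
      rw [(hpart1 N hN).2, stmt9_Mform hN]
      have hn1 : (1:ℝ) ≤ (N:ℝ) := by exact_mod_cast hN
      have ha0 : (0:ℝ) ≤ (N:ℝ) / ((N:ℝ) + 2) := by positivity
      have ha1 : (N:ℝ) / ((N:ℝ) + 2) ≤ 1 := by rw [div_le_one (by linarith)]; linarith
      have := Real.rpow_nonneg ha0 ((N:ℝ) / 2)
      nlinarith
    · filter_upwards [eventually_ge_atTop 1] with N hN
      rw [(hpart1 N hN).2, stmt9_Mform hN]
      have hn1 : (1:ℝ) ≤ (N:ℝ) := by exact_mod_cast hN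
      have ha0 : (0:ℝ) ≤ (N:ℝ) / ((N:ℝ) + 2) := by positivity
      have ha1 : (N:ℝ) / ((N:ℝ) + 2) ≤ 1 := by rw [div_le_one (by linarith)]; linarith
      have h1 : ((N:ℝ) / ((N:ℝ) + 2)) ^ ((N:ℝ) / 2) ≤ 1 :=
        Real.rpow_le_one ha0 ha1 (by positivity)
      calc (1 - (N:ℝ) / ((N:ℝ) + 2)) * ((N:ℝ) / ((N:ℝ) + 2)) ^ ((N:ℝ) / 2)
          ≤ (1 - (N:ℝ) / ((N:ℝ) + 2)) * 1 :=
            mul_le_mul_of_nonneg_left h1 (by linarith)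
        _ = 2 / ((N:ℝ) + 2) := by rw [mul_one]; field_simp; ring
        _ ≤ 2 / (N:ℝ) := by gcongr <;> linarith
    · exact tendsto_const_div_atTop_nhds_zero_nat 2
  refine ⟨hpart1, hpart2, ?_⟩
  rintro ⟨C, hC, hCle⟩
  have h3 : Tendsto (fun N : ℕ => C * vNorm (fun x : X => (φ x) ^ N)) atTop (𝓝 0) := by
    simpa using hpart2.const_mul C
  obtain ⟨N, hN1, hNlt⟩ :=
    ((eventually_ge_atTop 1).and (h3.eventually_lt_const zero_lt_one)).exists
  have h4 := hCle N hN1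
  rw [(hpart1 N hN1).1] at h4
  linarith
end

section
/- Let p ∈ [1,∞) be a real number, k ∈ ℕ with p ≤ k, and let ℓ_p denote the complex Banach space ℓ_p(ℕ, ℂ). Define Q : ℓ_p → ℂ by Q(x) := Σ_{n=1}^∞ [(1 − 1/n) x_n^k + (1 + 1/n) x_n^{k+1}] (the series converges absolutely for every x ∈ ℓ_p). Then: (1) sup_{‖x‖_p ≤ 1} |Q(x)| = 2, and |Q(e_1)| = 2 where e_1 is the first canonical unit vector, so Q attains its supremum norm; (2) for every s ∈ (0,1), sup_{‖x‖_p ≤ s} |Q(x)| = s^k + s^{k+1} while |Q(x)| < s^k + s^{k+1} for every x with ‖x‖_p ≤ s, so Q does not attain its s-norm for any s ∈ (0,1); (3) Q does not attain its v-norm: for every x with ‖x‖_p ≤ 1 one has (1 − ‖x‖_p²)|Q(x)| < sup_{‖y‖_p < 1} (1 − ‖y‖_p²)|Q(y)|. -/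
open Filter Topology Metric

open scoped ENNReal

/-- The polynomial `Q(x) = ∑_{n≥1} (1 - 1/n) x_n^k + (1 + 1/n) x_n^{k+1}` on `ℓ_p`
(indexed here by `n : ℕ` with coefficients `1 ∓ 1/(n+1)`). -/
noncomputable def Qpoly (p : ℝ≥0∞) (k : ℕ) (x : lp (fun _ : ℕ => ℂ) p) : ℂ :=
  ∑' n : ℕ, ((1 - 1 / ((n : ℂ) + 1)) * (x n) ^ k + (1 + 1 / ((n : ℂ) + 1)) * (x n) ^ (k + 1))

/-!
For `t = |x_n| ≤ 1` the `n`-th summand of `Q` has modulus at most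
`(1 - εₙ) t^k + (1 + εₙ) t^(k+1) = t^k + t^(k+1) - εₙ (t^k - t^(k+1))` with `εₙ = 1/(n+1) > 0`,
and since `p ≤ k` we have `∑ |x_n|^k ≤ ‖x‖^k` (likewise for `k + 1`). Hence
`|Q x| < ‖x‖^k + ‖x‖^(k+1)` whenever `0 < ‖x‖ < 1`, while `Q (s e_n) → s^k + s^(k+1)` as
`n → ∞`: the `s`-norm is `s^k + s^(k+1)` and is never attained, and the `v`-norm, being at least
`(1 - s²)(s^k + s^(k+1))` for every `s < 1`, is never attained either. On the closed unit ball
`|Q x| ≤ 2 ∑ |x_n|^k ≤ 2`, with equality at `e_1` because `ε₀ = 1`.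
-/

namespace lp

variable {α : Type*} {E : α → Type*} [∀ i, NormedAddCommGroup (E i)] {p : ℝ≥0∞}

lemma norm_pow_le_mul_norm_rpow (hp : 0 < p.toReal) {m : ℕ} (hm : p.toReal ≤ m) (f : lp E p)
    (i : α) : ‖f i‖ ^ m ≤ ‖f i‖ ^ p.toReal * ‖f‖ ^ ((m : ℝ) - p.toReal) := by
  have hfi : ‖f i‖ ≤ ‖f‖ := norm_apply_le_norm (ENNReal.toReal_pos_iff.1 hp).1.ne' f i
  calc ‖f i‖ ^ m = ‖f i‖ ^ p.toReal * ‖f i‖ ^ ((m : ℝ) - p.toReal) := by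
        rw [← Real.rpow_add_of_nonneg (norm_nonneg _) hp.le (by linarith), add_sub_cancel,
          Real.rpow_natCast]
    _ ≤ ‖f i‖ ^ p.toReal * ‖f‖ ^ ((m : ℝ) - p.toReal) := by gcongr

lemma summable_norm_pow (hp : 0 < p.toReal) {m : ℕ} (hm : p.toReal ≤ m) (f : lp E p) :
    Summable fun i => ‖f i‖ ^ m :=
  .of_nonneg_of_le (fun _ => by positivity) (norm_pow_le_mul_norm_rpow hp hm f)
    ((hasSum_norm hp f).summable.mul_right _)

lemma tsum_norm_pow_le (hp : 0 < p.toReal) {m : ℕ} (hm : p.toReal ≤ m) (f : lp E p) :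
    ∑' i, ‖f i‖ ^ m ≤ ‖f‖ ^ m :=
  calc ∑' i, ‖f i‖ ^ m ≤ ∑' i, ‖f i‖ ^ p.toReal * ‖f‖ ^ ((m : ℝ) - p.toReal) :=
        (summable_norm_pow hp hm f).tsum_le_tsum (norm_pow_le_mul_norm_rpow hp hm f)
          ((hasSum_norm hp f).summable.mul_right _)
    _ = ‖f‖ ^ m := by
        rw [tsum_mul_right, (hasSum_norm hp f).tsum_eq,
          ← Real.rpow_add_of_nonneg (norm_nonneg' f) hp.le (by linarith), add_sub_cancel,
          Real.rpow_natCast]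

end lp

noncomputable def qTerm (k n : ℕ) (z : ℂ) : ℂ :=
  (1 - 1 / ((n : ℂ) + 1)) * z ^ k + (1 + 1 / ((n : ℂ) + 1)) * z ^ (k + 1)

noncomputable def qTermReal (k n : ℕ) (t : ℝ) : ℝ :=
  (1 - 1 / ((n : ℝ) + 1)) * t ^ k + (1 + 1 / ((n : ℝ) + 1)) * t ^ (k + 1)

lemma Qpoly_eq_tsum_qTerm (p : ℝ≥0∞) (k : ℕ) (x : lp (fun _ : ℕ => ℂ) p) :
    Qpoly p k x = ∑' n, qTerm k n (x n) :=
  rfl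

section qTerm

variable {k n : ℕ} {t : ℝ}

lemma one_div_nat_add_one_le_one (n : ℕ) : 1 / ((n : ℝ) + 1) ≤ 1 :=
  div_le_one_of_le₀ (by linarith [n.cast_nonneg (α := ℝ)]) (by positivity)

lemma qTerm_ofReal (k n : ℕ) (t : ℝ) : qTerm k n t = qTermReal k n t := by
  simp only [qTerm, qTermReal]
  push_cast
  ring

lemma qTermReal_nonneg (ht : 0 ≤ t) : 0 ≤ qTermReal k n t := by
  have := one_div_nat_add_one_le_one n
  unfold qTermReal
  exact add_nonneg (mul_nonneg (by linarith) (by positivity)) (by positivity)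

lemma norm_qTerm_le (k n : ℕ) (z : ℂ) : ‖qTerm k n z‖ ≤ qTermReal k n ‖z‖ := by
  have h₁ : (0 : ℝ) ≤ 1 - 1 / ((n : ℝ) + 1) := by linarith [one_div_nat_add_one_le_one n]
  have h₂ : (0 : ℝ) ≤ 1 + 1 / ((n : ℝ) + 1) := by positivity
  calc ‖qTerm k n z‖
      ≤ ‖(1 - 1 / ((n : ℂ) + 1)) * z ^ k‖ + ‖(1 + 1 / ((n : ℂ) + 1)) * z ^ (k + 1)‖ :=
        norm_add_le _ _
    _ = qTermReal k n ‖z‖ := by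
        have e₁ : (1 - 1 / ((n : ℂ) + 1)) = ((1 - 1 / ((n : ℝ) + 1) : ℝ) : ℂ) := by push_cast; rfl
        have e₂ : (1 + 1 / ((n : ℂ) + 1)) = ((1 + 1 / ((n : ℝ) + 1) : ℝ) : ℂ) := by push_cast; rfl
        rw [norm_mul, norm_mul, norm_pow, norm_pow, e₁, e₂, Complex.norm_real,
          Complex.norm_real, Real.norm_of_nonneg h₁, Real.norm_of_nonneg h₂, qTermReal]

lemma norm_qTerm_ofReal (ht : 0 ≤ t) : ‖qTerm k n t‖ = qTermReal k n t := by
  rw [qTerm_ofReal, Complex.norm_real, Real.norm_of_nonneg (qTermReal_nonneg ht)]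

lemma qTermReal_eq (k n : ℕ) (t : ℝ) :
    qTermReal k n t = t ^ k + t ^ (k + 1) - 1 / ((n : ℝ) + 1) * (t ^ k - t ^ (k + 1)) := by
  unfold qTermReal
  ring

lemma qTermReal_le (ht₀ : 0 ≤ t) (ht₁ : t ≤ 1) : qTermReal k n t ≤ t ^ k + t ^ (k + 1) := by
  have : t ^ (k + 1) ≤ t ^ k := pow_le_pow_of_le_one ht₀ ht₁ k.le_succ
  rw [qTermReal_eq]
  have : 0 ≤ 1 / ((n : ℝ) + 1) * (t ^ k - t ^ (k + 1)) :=
    mul_nonneg (by positivity) (sub_nonneg.2 this)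
  linarith

lemma qTermReal_lt (ht₀ : 0 < t) (ht₁ : t < 1) : qTermReal k n t < t ^ k + t ^ (k + 1) := by
  have : t ^ (k + 1) < t ^ k := pow_lt_pow_right_of_lt_one₀ ht₀ ht₁ k.lt_succ_self
  rw [qTermReal_eq]
  have : 0 < 1 / ((n : ℝ) + 1) * (t ^ k - t ^ (k + 1)) :=
    mul_pos (by positivity) (sub_pos.2 this)
  linarith

lemma qTermReal_le_two_mul_add (ht : 0 ≤ t) :
    qTermReal k n t ≤ 2 * (t ^ k + t ^ (k + 1)) := by
  have := one_div_nat_add_one_le_one n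
  have : (0 : ℝ) ≤ 1 / ((n : ℝ) + 1) := by positivity
  unfold qTermReal
  nlinarith [pow_nonneg ht k, pow_nonneg ht (k + 1)]

lemma qTermReal_le_two_mul_pow (ht₀ : 0 ≤ t) (ht₁ : t ≤ 1) : qTermReal k n t ≤ 2 * t ^ k := by
  have : t ^ (k + 1) ≤ t ^ k := pow_le_pow_of_le_one ht₀ ht₁ k.le_succ
  linarith [qTermReal_le (k := k) (n := n) ht₀ ht₁]

lemma tendsto_qTermReal (k : ℕ) (t : ℝ) :
    Tendsto (fun n => qTermReal k n t) atTop (𝓝 (t ^ k + t ^ (k + 1))) := by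
  have hcont : Continuous fun ε : ℝ => (1 - ε) * t ^ k + (1 + ε) * t ^ (k + 1) := by fun_prop
  simpa [Function.comp_def, qTermReal] using
    (hcont.tendsto 0).comp tendsto_one_div_add_atTop_nhds_zero_nat

end qTerm

section Qpoly

variable {p : ℝ≥0∞} {k : ℕ}

lemma Qpoly_zero (hk : k ≠ 0) : Qpoly p k 0 = 0 := by
  simp [Qpoly_eq_tsum_qTerm, qTerm, hk]

lemma Qpoly_single (hk : k ≠ 0) (i : ℕ) (z : ℂ) : Qpoly p k (lp.single p i z) = qTerm k i z := by
  rw [Qpoly_eq_tsum_qTerm, tsum_eq_single i fun j hj => ?_, lp.single_apply_self]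
  simp [hj, qTerm, hk]

lemma norm_Qpoly_single_zero_one (hk : k ≠ 0) : ‖Qpoly p k (lp.single p 0 1)‖ = 2 := by
  rw [Qpoly_single hk]
  norm_num [qTerm]

lemma tendsto_norm_Qpoly_single (hk : k ≠ 0) {t : ℝ} (ht : 0 ≤ t) :
    Tendsto (fun i => ‖Qpoly p k (lp.single p i (t : ℂ))‖) atTop (𝓝 (t ^ k + t ^ (k + 1))) := by
  simpa only [Qpoly_single hk, norm_qTerm_ofReal ht] using tendsto_qTermReal k t

section

variable (hp : 0 < p.toReal) (hk : p.toReal ≤ k)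
include hp hk

lemma summable_qTermReal (x : lp (fun _ : ℕ => ℂ) p) :
    Summable fun n => qTermReal k n ‖x n‖ :=
  have hk' : p.toReal ≤ ↑(k + 1) := by push_cast; linarith
  .of_nonneg_of_le (fun _ => qTermReal_nonneg (norm_nonneg _))
    (fun _ => qTermReal_le_two_mul_add (norm_nonneg _))
    (((lp.summable_norm_pow hp hk x).add (lp.summable_norm_pow hp hk' x)).mul_left 2)

lemma summable_norm_qTerm (x : lp (fun _ : ℕ => ℂ) p) :
    Summable fun n => ‖qTerm k n (x n)‖ :=
  .of_nonneg_of_le (fun _ => norm_nonneg _) (fun n => norm_qTerm_le k n (x n))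
    (summable_qTermReal hp hk x)

lemma norm_Qpoly_le_tsum_qTermReal (x : lp (fun _ : ℕ => ℂ) p) :
    ‖Qpoly p k x‖ ≤ ∑' n, qTermReal k n ‖x n‖ :=
  (norm_tsum_le_tsum_norm (summable_norm_qTerm hp hk x)).trans <|
    (summable_norm_qTerm hp hk x).tsum_le_tsum (fun n => norm_qTerm_le k n (x n))
      (summable_qTermReal hp hk x)

lemma norm_Qpoly_lt {x : lp (fun _ : ℕ => ℂ) p} (hx₀ : x ≠ 0) (hx₁ : ‖x‖ < 1) :
    ‖Qpoly p k x‖ < ‖x‖ ^ k + ‖x‖ ^ (k + 1) := by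
  have hk' : p.toReal ≤ ↑(k + 1) := by push_cast; linarith
  obtain ⟨n₀, hn₀⟩ : ∃ n, x n ≠ 0 := by
    contrapose! hx₀
    exact lp.ext (funext hx₀)
  have hcoord (n : ℕ) : ‖x n‖ < 1 :=
    (lp.norm_apply_le_norm (ENNReal.toReal_pos_iff.1 hp).1.ne' x n).trans_lt hx₁
  have hsum_k := lp.summable_norm_pow hp hk x
  have hsum_k' := lp.summable_norm_pow hp hk' x
  calc ‖Qpoly p k x‖ ≤ ∑' n, qTermReal k n ‖x n‖ := norm_Qpoly_le_tsum_qTermReal hp hk x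
    _ < ∑' n, (‖x n‖ ^ k + ‖x n‖ ^ (k + 1)) :=
        Summable.tsum_lt_tsum (i := n₀) (fun n => qTermReal_le (norm_nonneg _) (hcoord n).le)
          (qTermReal_lt (norm_pos_iff.2 hn₀) (hcoord n₀)) (summable_qTermReal hp hk x)
          (hsum_k.add hsum_k')
    _ = ∑' n, ‖x n‖ ^ k + ∑' n, ‖x n‖ ^ (k + 1) := hsum_k.tsum_add hsum_k'
    _ ≤ ‖x‖ ^ k + ‖x‖ ^ (k + 1) :=
        add_le_add (lp.tsum_norm_pow_le hp hk x) (lp.tsum_norm_pow_le hp hk' x)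

end

variable [Fact (1 ≤ p)]

lemma norm_single_ofReal (i : ℕ) {t : ℝ} (ht : 0 ≤ t) :
    ‖lp.single (E := fun _ : ℕ => ℂ) p i (t : ℂ)‖ = t := by
  rw [lp.norm_single (zero_lt_one.trans_le Fact.out), Complex.norm_real, Real.norm_of_nonneg ht]

variable (hp : 0 < p.toReal) (hk : p.toReal ≤ k)
include hp hk

lemma norm_Qpoly_le_two {x : lp (fun _ : ℕ => ℂ) p} (hx : ‖x‖ ≤ 1) : ‖Qpoly p k x‖ ≤ 2 :=
  calc ‖Qpoly p k x‖ ≤ ∑' n, qTermReal k n ‖x n‖ := norm_Qpoly_le_tsum_qTermReal hp hk x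
    _ ≤ ∑' n, 2 * ‖x n‖ ^ k :=
        (summable_qTermReal hp hk x).tsum_le_tsum
          (fun n => qTermReal_le_two_mul_pow (norm_nonneg _)
            ((lp.norm_apply_le_norm (ENNReal.toReal_pos_iff.1 hp).1.ne' x n).trans hx))
          ((lp.summable_norm_pow hp hk x).mul_left 2)
    _ = 2 * ∑' n, ‖x n‖ ^ k := tsum_mul_left
    _ ≤ 2 * ‖x‖ ^ k := by grw [lp.tsum_norm_pow_le hp hk x]
    _ ≤ 2 := by grw [pow_le_one₀ (norm_nonneg x) hx, mul_one]

lemma norm_Qpoly_lt_of_norm_le {s : ℝ} (hs₀ : 0 < s) (hs₁ : s < 1)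
    {x : lp (fun _ : ℕ => ℂ) p} (hx : ‖x‖ ≤ s) : ‖Qpoly p k x‖ < s ^ k + s ^ (k + 1) := by
  rcases eq_or_ne x 0 with rfl | hx₀
  · rw [Qpoly_zero (Nat.cast_pos.1 (hp.trans_le hk)).ne', norm_zero]
    positivity
  · calc ‖Qpoly p k x‖ < ‖x‖ ^ k + ‖x‖ ^ (k + 1) := norm_Qpoly_lt hp hk hx₀ (hx.trans_lt hs₁)
      _ ≤ s ^ k + s ^ (k + 1) := by gcongr

lemma sSup_norm_Qpoly_unitBall :
    sSup ((fun x : lp (fun _ : ℕ => ℂ) p => ‖Qpoly p k x‖) '' {x | ‖x‖ ≤ 1}) = 2 := by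
  refine IsGreatest.csSup_eq ⟨⟨lp.single p 0 1, ?_, norm_Qpoly_single_zero_one ?_⟩, ?_⟩
  · simpa using (norm_single_ofReal (p := p) 0 zero_le_one).le
  · exact (Nat.cast_pos.1 (hp.trans_le hk)).ne'
  · rintro _ ⟨x, hx, rfl⟩
    exact norm_Qpoly_le_two hp hk hx

lemma sSup_norm_Qpoly_closedBall {s : ℝ} (hs₀ : 0 < s) (hs₁ : s < 1) :
    sSup ((fun x : lp (fun _ : ℕ => ℂ) p => ‖Qpoly p k x‖) '' {x | ‖x‖ ≤ s}) =
      s ^ k + s ^ (k + 1) := by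
  have hk₀ : k ≠ 0 := (Nat.cast_pos.1 (hp.trans_le hk)).ne'
  have hub : s ^ k + s ^ (k + 1) ∈ upperBounds
      ((fun x : lp (fun _ : ℕ => ℂ) p => ‖Qpoly p k x‖) '' {x | ‖x‖ ≤ s}) := by
    rintro _ ⟨x, hx, rfl⟩
    exact (norm_Qpoly_lt_of_norm_le hp hk hs₀ hs₁ hx).le
  have hcl : s ^ k + s ^ (k + 1) ∈ closure
      ((fun x : lp (fun _ : ℕ => ℂ) p => ‖Qpoly p k x‖) '' {x | ‖x‖ ≤ s}) :=
    mem_closure_of_tendsto (tendsto_norm_Qpoly_single hk₀ hs₀.le)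
      (.of_forall fun i => ⟨_, (norm_single_ofReal i hs₀.le).le, rfl⟩)
  exact (isLUB_of_mem_closure hub hcl).csSup_eq ⟨_, 0, by simpa using hs₀.le, rfl⟩

lemma le_vNorm_Qpoly {s : ℝ} (hs₀ : 0 ≤ s) (hs₁ : s < 1) :
    (1 - s ^ 2) * (s ^ k + s ^ (k + 1)) ≤ vNorm (Qpoly p k) := by
  have hbdd : BddAbove ((fun x : lp (fun _ : ℕ => ℂ) p => (1 - ‖x‖ ^ 2) * ‖Qpoly p k x‖) ''
      {x | ‖x‖ < 1}) := by
    refine ⟨2, ?_⟩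
    rintro _ ⟨x, hx, rfl⟩
    calc (1 - ‖x‖ ^ 2) * ‖Qpoly p k x‖ ≤ 1 * 2 :=
          mul_le_mul (sub_le_self 1 (by positivity)) (norm_Qpoly_le_two hp hk (le_of_lt hx))
            (norm_nonneg _) zero_le_one
      _ = 2 := one_mul 2
  refine le_of_tendsto' ((tendsto_norm_Qpoly_single (p := p) (Nat.cast_pos.1 (hp.trans_le hk)).ne'
    hs₀).const_mul (1 - s ^ 2)) fun i => le_csSup hbdd ⟨lp.single p i (s : ℂ), ?_, ?_⟩
  · simpa [norm_single_ofReal i hs₀] using hs₁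
  · simp only [norm_single_ofReal i hs₀]

lemma mul_norm_Qpoly_lt_vNorm {x : lp (fun _ : ℕ => ℂ) p} (hx : ‖x‖ ≤ 1) :
    (1 - ‖x‖ ^ 2) * ‖Qpoly p k x‖ < vNorm (Qpoly p k) := by
  by_cases h : x ≠ 0 ∧ ‖x‖ < 1
  · have : ‖x‖ ^ 2 < 1 := pow_lt_one₀ (norm_nonneg x) h.2 two_ne_zero
    calc (1 - ‖x‖ ^ 2) * ‖Qpoly p k x‖ < (1 - ‖x‖ ^ 2) * (‖x‖ ^ k + ‖x‖ ^ (k + 1)) :=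
          mul_lt_mul_of_pos_left (norm_Qpoly_lt hp hk h.1 h.2) (by linarith)
      _ ≤ vNorm (Qpoly p k) := le_vNorm_Qpoly hp hk (norm_nonneg x) h.2
  · have hzero : (1 - ‖x‖ ^ 2) * ‖Qpoly p k x‖ = 0 := by
      rcases not_and_or.1 h with hx₀ | hx₁
      · rw [not_not.1 hx₀, Qpoly_zero (Nat.cast_pos.1 (hp.trans_le hk)).ne']
        simp
      · simp [hx.antisymm (not_lt.1 hx₁)]
    calc (1 - ‖x‖ ^ 2) * ‖Qpoly p k x‖ = 0 := hzero
      _ < (1 - (1 / 2) ^ 2) * ((1 / 2) ^ k + (1 / 2) ^ (k + 1)) := by positivity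
      _ ≤ vNorm (Qpoly p k) := le_vNorm_Qpoly hp hk (by norm_num) (by norm_num)

end Qpoly

/-- `Q` attains its supremum norm (with value `2`, attained at `e₁`), but for
every `s ∈ (0,1)` its supremum over the ball of radius `s` is `s^k + s^{k+1}` and is never
attained; consequently `Q` does not attain its `v`-norm. The defining series converges
absolutely at every point. -/
theorem stmt10 (p : ℝ≥0∞) [Fact (1 ≤ p)] (hp : p ≠ ⊤) (k : ℕ) (hk : p.toReal ≤ (k : ℝ)) :
    (∀ x : lp (fun _ : ℕ => ℂ) p,
      Summable (fun n : ℕ =>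
        ‖(1 - 1 / ((n : ℂ) + 1)) * (x n) ^ k + (1 + 1 / ((n : ℂ) + 1)) * (x n) ^ (k + 1)‖)) ∧
    (sSup ((fun x : lp (fun _ : ℕ => ℂ) p => ‖Qpoly p k x‖) '' {x | ‖x‖ ≤ 1}) = 2 ∧
      ‖Qpoly p k (lp.single p 0 1)‖ = 2) ∧
    (∀ s : ℝ, 0 < s → s < 1 →
      sSup ((fun x : lp (fun _ : ℕ => ℂ) p => ‖Qpoly p k x‖) '' {x | ‖x‖ ≤ s}) =
        s ^ k + s ^ (k + 1) ∧
      ∀ x : lp (fun _ : ℕ => ℂ) p, ‖x‖ ≤ s → ‖Qpoly p k x‖ < s ^ k + s ^ (k + 1)) ∧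
    (∀ x : lp (fun _ : ℕ => ℂ) p, ‖x‖ ≤ 1 →
      (1 - ‖x‖ ^ 2) * ‖Qpoly p k x‖ < vNorm (Qpoly p k)) := by
  have hp₀ : 0 < p.toReal := ENNReal.toReal_pos (zero_lt_one.trans_le Fact.out).ne' hp
  have hk₀ : k ≠ 0 := (Nat.cast_pos.1 (hp₀.trans_le hk)).ne'
  exact ⟨summable_norm_qTerm hp₀ hk,
    ⟨sSup_norm_Qpoly_unitBall hp₀ hk, norm_Qpoly_single_zero_one hk₀⟩,
    fun s hs₀ hs₁ => ⟨sSup_norm_Qpoly_closedBall hp₀ hk hs₀ hs₁,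
      fun _ => norm_Qpoly_lt_of_norm_le hp₀ hk hs₀ hs₁⟩,
    fun _ => mul_norm_Qpoly_lt_vNorm hp₀ hk⟩
end
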